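/- arXiv:2312.12428 — 6 statements merged into one kernel-verified Lean document; each statement's English description precedes it below -/
import Mathlib

section
/- The proportion of ordered pairs (i, j) ∈ [n]² with gcd(i, j) = 1 converges to 6/π² as n → ∞; i.e., (1/n²)·#{(i,j) : 1 ≤ i,j ≤ n, gcd(i,j) = 1} → 6/π². -/
open Filter
open scoped ArithmeticFunction.Moebius ArithmeticFunction.zeta

open Finset ArithmeticFunction Complex in
private lemma sum_moebius_div' (m : ℕ) :
    (∑ d ∈ m.divisors, (μ d : ℤ)) = if m = 1 then 1 else 0 := by
  calc (∑ d ∈ m.divisors, (μ d : ℤ)) = (μ * ζ : ArithmeticFunction ℤ) m :=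
        coe_mul_zeta_apply.symm
    _ = (1 : ArithmeticFunction ℤ) m := by rw [moebius_mul_coe_zeta]
    _ = if m = 1 then 1 else 0 := ArithmeticFunction.one_apply

open Finset ArithmeticFunction in
private lemma divisors_gcd_eq' (n i j : ℕ) (hi : i ∈ Finset.Icc 1 n)
    (hj : j ∈ Finset.Icc 1 n) :
    (Nat.gcd i j).divisors = (Finset.Icc 1 n).filter (fun d => d ∣ i ∧ d ∣ j) := by
  rw [Finset.mem_Icc] at hi hj
  ext d
  simp only [Nat.mem_divisors, Finset.mem_filter, Finset.mem_Icc, Nat.dvd_gcd_iff]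
  constructor
  · rintro ⟨⟨h1, h2⟩, -⟩
    exact ⟨⟨Nat.pos_of_dvd_of_pos h1 hi.1, (Nat.le_of_dvd hi.1 h1).trans hi.2⟩, h1, h2⟩
  · rintro ⟨-, h1, h2⟩
    exact ⟨⟨h1, h2⟩, Nat.ne_of_gt (Nat.gcd_pos_of_pos_left j hi.1)⟩

open Finset ArithmeticFunction in
private lemma card_coprime_eq' (n : ℕ) :
    ((((Finset.Icc 1 n ×ˢ Finset.Icc 1 n).filter fun p => Nat.gcd p.1 p.2 = 1).card : ℤ)) =
      ∑ d ∈ Finset.Icc 1 n, μ d * ((n / d : ℕ) : ℤ) ^ 2 := by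
  rw [Finset.card_filter]
  push_cast
  calc (∑ p ∈ Finset.Icc 1 n ×ˢ Finset.Icc 1 n, if Nat.gcd p.1 p.2 = 1 then (1:ℤ) else 0)
      = ∑ p ∈ Finset.Icc 1 n ×ˢ Finset.Icc 1 n, ∑ d ∈ (Nat.gcd p.1 p.2).divisors, (μ d : ℤ) :=
        Finset.sum_congr rfl fun p _ => (sum_moebius_div' _).symm
    _ = ∑ p ∈ Finset.Icc 1 n ×ˢ Finset.Icc 1 n, ∑ d ∈ Finset.Icc 1 n,
          if d ∣ p.1 ∧ d ∣ p.2 then (μ d : ℤ) else 0 := by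
        refine Finset.sum_congr rfl fun p hp => ?_
        rw [Finset.mem_product] at hp
        rw [divisors_gcd_eq' n p.1 p.2 hp.1 hp.2, Finset.sum_filter]
    _ = ∑ d ∈ Finset.Icc 1 n, ∑ p ∈ Finset.Icc 1 n ×ˢ Finset.Icc 1 n,
          if d ∣ p.1 ∧ d ∣ p.2 then (μ d : ℤ) else 0 := Finset.sum_comm
    _ = ∑ d ∈ Finset.Icc 1 n, μ d * ((n / d : ℕ) : ℤ) ^ 2 := by
        refine Finset.sum_congr rfl fun d _ => ?_
        rw [← Finset.sum_filter, Finset.sum_const, Finset.filter_product, Finset.card_product]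
        have : Finset.Icc 1 n = Finset.Ioc 0 n := rfl
        rw [this, Nat.Ioc_filter_dvd_card_eq_div]
        rw [nsmul_eq_mul]
        push_cast
        ring

open Finset ArithmeticFunction in
private lemma tend_div' (d : ℕ) (hd : 1 ≤ d) :
    Tendsto (fun n : ℕ => ((n / d : ℕ) : ℝ) / n) atTop (nhds (1 / d)) := by
  have hd' : (0:ℝ) < d := by exact_mod_cast hd
  apply tendsto_of_tendsto_of_tendsto_of_le_of_le'
    (g := fun n : ℕ => 1 / (d:ℝ) - 1 / n) (h := fun _ : ℕ => 1 / (d:ℝ))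
  · simpa using (tendsto_const_nhds (x := 1/(d:ℝ))).sub
      tendsto_one_div_atTop_nhds_zero_nat
  · exact tendsto_const_nhds
  · filter_upwards [eventually_ge_atTop 1] with n hn
    have hn' : (0:ℝ) < n := by exact_mod_cast hn
    have h0 : n < d * (n / d) + d := by
      have h1 := Nat.div_add_mod n d
      have h2 := Nat.mod_lt n (Nat.lt_of_lt_of_le Nat.zero_lt_one hd)
      omega
    have h1 : (n:ℝ) < d * ((n / d : ℕ) : ℝ) + d := by exact_mod_cast Nat.cast_lt.mpr h0
    rw [div_sub_div _ _ (ne_of_gt hd') (ne_of_gt hn'), div_le_div_iff₀ (by positivity) hn']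
    nlinarith
  · filter_upwards [eventually_ge_atTop 1] with n hn
    have hn' : (0:ℝ) < n := by exact_mod_cast hn
    have h2 : ((n / d : ℕ) : ℝ) ≤ (n:ℝ) / d := Nat.cast_div_le
    have h3 : ((n / d : ℕ) : ℝ) * d ≤ n := by
      rw [← le_div_iff₀ hd']; exact h2
    rw [div_le_div_iff₀ hn' hd']
    linarith

open Finset ArithmeticFunction in
private lemma moebius_abs' (d : ℕ) : |(μ d : ℝ)| ≤ 1 := by
  rcases eq_or_ne (μ d) 0 with h | h
  · simp [h]
  · rcases moebius_ne_zero_iff_eq_or.mp h with h | h <;> simp [h]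

open Finset ArithmeticFunction Complex in
private lemma moebius_tsum_eq' : ∑' d : ℕ, (μ d : ℝ) / (d : ℝ) ^ 2 = 6 / Real.pi ^ 2 := by
  have hs : (1:ℝ) < (2:ℂ).re := by norm_num
  have hL : LSeries (fun n => ((μ n : ℤ) : ℂ)) 2 = ∑' d : ℕ, ((μ d : ℝ) / (d : ℝ) ^ 2 : ℂ) := by
    refine tsum_congr fun d => ?_
    rcases eq_or_ne d 0 with rfl | hd
    · simp [LSeries.term_zero]
    · rw [LSeries.term_of_ne_zero hd]
      push_cast
      norm_num [Complex.cpow_natCast]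
  have hmul := LSeries_zeta_mul_Lseries_moebius (s := 2) hs
  have hz : LSeries (fun n => ((ζ n : ℕ) : ℂ)) 2 = riemannZeta 2 := LSeries_zeta_eq_riemannZeta hs
  have hzval : riemannZeta 2 = (Real.pi : ℂ) ^ 2 / 6 := riemannZeta_two
  have hpi : (Real.pi : ℂ) ≠ 0 := ofReal_ne_zero.mpr Real.pi_ne_zero
  have hmoeb : LSeries (fun n => ((μ n : ℤ) : ℂ)) 2 = 6 / (Real.pi : ℂ) ^ 2 := by
    rw [hz, hzval] at hmul
    rw [eq_div_iff (pow_ne_zero 2 hpi)]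
    linear_combination (6 : ℂ) * hmul
  have key := hL.symm.trans hmoeb
  have h3 : ((∑' d : ℕ, (μ d : ℝ) / (d : ℝ) ^ 2 : ℝ) : ℂ)
      = ∑' d : ℕ, ((μ d : ℝ) / (d : ℝ) ^ 2 : ℂ) := by
    rw [Complex.ofReal_tsum]
    exact tsum_congr fun d => by push_cast; ring
  have h2 : ((6 / Real.pi ^ 2 : ℝ) : ℂ) = 6 / (Real.pi : ℂ) ^ 2 := by push_cast; ring
  exact Complex.ofReal_injective ((h3.trans key).trans h2.symm)

open Finset ArithmeticFunction in
/-- The proportion of ordered pairs `(i, j) ∈ [n]²` with `gcd(i, j) = 1`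
converges to `6/π²` as `n → ∞`. -/
theorem coprime_density_tendsto :
    Tendsto (fun n : ℕ =>
        (((Finset.Icc 1 n ×ˢ Finset.Icc 1 n).filter fun p => Nat.gcd p.1 p.2 = 1).card : ℝ)
          / (n : ℝ) ^ 2)
      atTop (nhds (6 / Real.pi ^ 2)) := by
  have hbound : Summable (fun d : ℕ => 1 / (d:ℝ) ^ 2) := by
    rw [Real.summable_one_div_nat_pow]; norm_num
  set g : ℕ → ℕ → ℝ := fun n d =>
    if d ∈ Finset.Icc 1 n then (μ d : ℝ) * (((n / d : ℕ) : ℝ) / n) ^ 2 else 0 with hg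
  have hmain : Tendsto (fun n => ∑' d, g n d) atTop
      (nhds (∑' d : ℕ, (μ d : ℝ) / (d:ℝ) ^ 2)) := by
    apply tendsto_tsum_of_dominated_convergence hbound
    · intro d
      rcases Nat.eq_zero_or_pos d with rfl | hd
      · have : ∀ n : ℕ, g n 0 = 0 := fun n => by simp [hg]
        simp only [this]
        simp only [ArithmeticFunction.map_zero, Int.cast_zero, zero_div]
        exact tendsto_const_nhds
      · have h1 := tend_div' d hd
        have hdd : (d:ℝ) ≠ 0 := by positivity
        have h2 : Tendsto (fun n : ℕ => (μ d : ℝ) * (((n / d : ℕ) : ℝ) / n) ^ 2) atTop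
            (nhds ((μ d : ℝ) * (1 / (d:ℝ)) ^ 2)) := ((h1.pow 2).const_mul _)
        have hval : (μ d : ℝ) * (1 / (d:ℝ)) ^ 2 = (μ d : ℝ) / (d:ℝ) ^ 2 := by
          field_simp
        rw [hval] at h2
        apply h2.congr'
        filter_upwards [eventually_ge_atTop d] with n hn
        rw [hg]
        simp only [Finset.mem_Icc]
        rw [if_pos ⟨hd, hn⟩]
    · filter_upwards with n d
      by_cases hd : d ∈ Finset.Icc 1 n
      · rw [Finset.mem_Icc] at hd
        have hd1 : (0:ℝ) < d := by exact_mod_cast hd.1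
        have hn1 : (0:ℝ) < n := by
          have : 1 ≤ n := le_trans hd.1 hd.2
          exact_mod_cast this
        have hx0 : (0:ℝ) ≤ ((n / d : ℕ) : ℝ) / n := by positivity
        have hx : ((n / d : ℕ) : ℝ) / n ≤ 1 / d := by
          have h2 : ((n / d : ℕ) : ℝ) ≤ (n:ℝ) / d := Nat.cast_div_le
          rw [div_le_div_iff₀ hn1 hd1]
          have h3 : ((n / d : ℕ) : ℝ) * d ≤ n := by
            rw [← le_div_iff₀ hd1]; exact h2
          linarith
        have : g n d = (μ d : ℝ) * (((n / d : ℕ) : ℝ) / n) ^ 2 := by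
          rw [hg]; simp only [Finset.mem_Icc]; rw [if_pos hd]
        rw [this, Real.norm_eq_abs, abs_mul, abs_pow, abs_of_nonneg hx0]
        calc |(μ d : ℝ)| * (((n / d : ℕ) : ℝ) / n) ^ 2
            ≤ 1 * (1 / (d:ℝ)) ^ 2 :=
              mul_le_mul (moebius_abs' d) (pow_le_pow_left₀ hx0 hx 2) (by positivity)
                zero_le_one
          _ = 1 / (d:ℝ) ^ 2 := by rw [one_mul, div_pow, one_pow]
      · have : g n d = 0 := by rw [hg]; simp only [if_neg hd]
        rw [this, norm_zero]
        positivity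
  rw [moebius_tsum_eq'] at hmain
  apply hmain.congr'
  filter_upwards [eventually_ge_atTop 1] with n hn
  have hn0 : (n:ℝ) ≠ 0 := by positivity
  have hsum : ∑' d, g n d = ∑ d ∈ Finset.Icc 1 n, (μ d : ℝ) * (((n / d : ℕ) : ℝ) / n) ^ 2 := by
    rw [tsum_eq_sum (s := Finset.Icc 1 n) (fun d hd => by rw [hg]; simp only [if_neg hd])]
    exact Finset.sum_congr rfl fun d hd => by rw [hg]; simp only [if_pos hd]
  have hcast : ((((Finset.Icc 1 n ×ˢ Finset.Icc 1 n).filter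
        fun p => Nat.gcd p.1 p.2 = 1).card : ℝ))
      = ∑ d ∈ Finset.Icc 1 n, (μ d : ℝ) * ((n / d : ℕ) : ℝ) ^ 2 := by
    have h := congrArg (fun z : ℤ => (z : ℝ)) (card_coprime_eq' n)
    simp only [Int.cast_natCast, Int.cast_sum, Int.cast_mul, Int.cast_pow] at h
    exact h
  rw [hsum, hcast, Finset.sum_div]
  exact Finset.sum_congr rfl fun d hd => by field_simp
end

section
/- ∑_{j=1}^{n} φ(j) = 3n²/π² + O(n log n), i.e., there exists a constant C such that |∑_{j≤n} φ(j) − 3n²/π²| ≤ C·n·log(n+1) for all n ≥ 1. -/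
set_option maxHeartbeats 1000000

open ArithmeticFunction Finset Real
open scoped ArithmeticFunction.Moebius


lemma moebius_summable_real :
    Summable (fun d : ℕ => (μ d : ℝ) / (d : ℝ) ^ 2) := by
  apply Summable.of_norm
  apply Summable.of_nonneg_of_le (fun d => norm_nonneg _)
    (fun d => ?_) (Real.summable_one_div_nat_pow.mpr one_lt_two)
  rcases eq_or_ne d 0 with rfl | hd
  · simp
  · have hd2 : (0:ℝ) < (d:ℝ) ^ 2 := by positivity
    rw [Real.norm_eq_abs, abs_div, abs_of_pos hd2, div_le_div_iff₀ hd2 hd2, one_mul]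
    have : |(μ d : ℝ)| ≤ 1 := by exact_mod_cast (abs_moebius_le_one : |μ d| ≤ 1)
    nlinarith [hd2]


lemma moebius_hasSum : HasSum (fun d : ℕ => (μ d : ℝ) / (d : ℝ) ^ 2) (6 / π ^ 2) := by
  have hπ : (π : ℂ) ^ 2 ≠ 0 := by
    simp [Real.pi_ne_zero]
  have h1 : LSeries 1 2 * LSeries (fun n => (μ n : ℂ)) 2 = 1 :=
    LSeries_one_mul_Lseries_moebius (by norm_num)
  rw [LSeries_one_eq_riemannZeta (by norm_num), riemannZeta_two] at h1
  have h2 : LSeries (fun n => (μ n : ℂ)) 2 = 6 / (π : ℂ) ^ 2 := by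
    rw [eq_div_iff hπ]
    field_simp at h1
    linear_combination h1
  have h3 : LSeries (fun n => (μ n : ℂ)) 2
      = ∑' d : ℕ, ((((μ d : ℝ) / (d : ℝ) ^ 2) : ℝ) : ℂ) := by
    unfold LSeries
    congr 1
    ext d
    rcases eq_or_ne d 0 with rfl | hd
    · simp [LSeries.term]
    · rw [LSeries.term_of_ne_zero hd]
      push_cast [Complex.cpow_ofNat]
      ring
  rw [← Complex.ofReal_tsum] at h3
  have h4 : ((∑' d : ℕ, (μ d : ℝ) / (d : ℝ) ^ 2 : ℝ) : ℂ) = ((6 / π ^ 2 : ℝ) : ℂ) := by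
    rw [← h3, h2]; push_cast; ring
  have h5 := Complex.ofReal_injective h4
  rw [← h5]
  exact moebius_summable_real.hasSum


lemma totient_moebius_real {n : ℕ} (hn : 0 < n) :
    (Nat.totient n : ℝ) = ∑ x ∈ n.divisorsAntidiagonal, (μ x.1 : ℝ) * x.2 := by
  have := (sum_eq_iff_sum_mul_moebius_eq (R := ℝ)
      (f := fun i => (Nat.totient i : ℝ)) (g := fun i => (i : ℝ))).mp
    (fun m hm => by exact_mod_cast congrArg (Nat.cast : ℕ → ℝ) (Nat.sum_totient m))
  exact (this n hn).symm


lemma swap_sum (n : ℕ) (F : ℕ × ℕ → ℝ) :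
    ∑ j ∈ Icc 1 n, ∑ x ∈ j.divisorsAntidiagonal, F x
      = ∑ d ∈ Icc 1 n, ∑ q ∈ Icc 1 (n / d), F (d, q) := by
  rw [Finset.sum_sigma', Finset.sum_sigma']
  refine Finset.sum_nbij' (fun p => ⟨p.2.1, p.2.2⟩) (fun p => ⟨p.1 * p.2, (p.1, p.2)⟩)
    ?_ ?_ ?_ ?_ ?_
  · rintro ⟨j, d, q⟩ hp
    simp only [Finset.mem_sigma, Finset.mem_Icc, Nat.mem_divisorsAntidiagonal] at hp ⊢
    obtain ⟨⟨hj1, hjn⟩, hdq, hj0⟩ := hp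
    have hd : 0 < d := by
      rcases Nat.eq_zero_or_pos d with rfl|h
      · simp at hdq; omega
      · exact h
    have hq : 0 < q := by
      rcases Nat.eq_zero_or_pos q with rfl|h
      · simp at hdq; omega
      · exact h
    refine ⟨⟨hd, ?_⟩, hq, ?_⟩
    · calc d ≤ d * q := Nat.le_mul_of_pos_right _ hq
        _ ≤ n := by omega
    · rw [Nat.le_div_iff_mul_le hd]
      calc q * d = d * q := Nat.mul_comm _ _
        _ ≤ n := by omega
  · rintro ⟨d, q⟩ hp
    simp only [Finset.mem_sigma, Finset.mem_Icc, Nat.mem_divisorsAntidiagonal] at hp ⊢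
    obtain ⟨⟨hd1, hdn⟩, hq1, hqn⟩ := hp
    rw [Nat.le_div_iff_mul_le (by omega : 0 < d)] at hqn
    have hdq : d * q ≤ n := by
      calc d * q = q * d := Nat.mul_comm _ _
        _ ≤ n := hqn
    have h1 : 1 ≤ d * q := Nat.one_le_iff_ne_zero.mpr (by positivity)
    exact ⟨⟨h1, hdq⟩, trivial, by omega⟩
  · rintro ⟨j, d, q⟩ hp
    simp only [Finset.mem_sigma, Nat.mem_divisorsAntidiagonal] at hp
    simp [hp.2.1]
  · rintro ⟨d, q⟩ _
    rfl
  · rintro ⟨j, d, q⟩ _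
    rfl


lemma gauss_sum_real (m : ℕ) :
    ∑ q ∈ Icc 1 m, (q : ℝ) = m * (m + 1) / 2 := by
  induction m with
  | zero => simp
  | succ k ih =>
    rw [← Finset.Ico_add_one_right_eq_Icc, Finset.sum_Ico_succ_top (by omega), Finset.Ico_add_one_right_eq_Icc, ih]
    push_cast
    ring

lemma tail_bound (n : ℕ) (hn : 1 ≤ n) :
    |(∑ d ∈ Icc 1 n, (μ d : ℝ) / (d : ℝ) ^ 2) - 6 / π ^ 2| ≤ (1 : ℝ) / n := by
  set f : ℕ → ℝ := fun d => (μ d : ℝ) / (d : ℝ) ^ 2 with hf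
  have hs := moebius_summable_real
  have key : ∑ i ∈ range (n+1), f i + ∑' i, f (i + (n+1)) = ∑' i, f i :=
    hs.sum_add_tsum_nat_add (n+1)
  have hIcc : ∑ d ∈ Icc 1 n, f d = ∑ d ∈ range (n+1), f d := by
    rw [Finset.range_eq_Ico, Finset.sum_eq_sum_Ico_succ_bot (by omega)]
    have : f 0 = 0 := by simp [hf]
    rw [this, zero_add, ← Finset.Ico_add_one_right_eq_Icc]
  rw [hIcc, moebius_hasSum.tsum_eq] at *
  have heq : (∑ d ∈ range (n+1), f d) - 6 / π ^ 2 = -(∑' i, f (i + (n+1))) := by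
    linarith [key]
  rw [heq, abs_neg]
  -- bound the tail
  have hg : Summable (fun i : ℕ => (((i + (n+1) : ℕ) : ℝ) ^ 2)⁻¹) := by
    have := (summable_nat_add_iff (f := fun k : ℕ => (((k : ℕ) : ℝ) ^ 2)⁻¹) (n+1)).mpr
      (Real.summable_nat_pow_inv.mpr (by norm_num))
    exact this
  have habs : Summable (fun i : ℕ => |f (i + (n+1))|) :=
    ((summable_nat_add_iff (n+1)).mpr hs.abs)
  have h1 : |∑' i, f (i + (n+1))| ≤ ∑' i, |f (i + (n+1))| := by
    simpa [Real.norm_eq_abs] using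
      norm_tsum_le_tsum_norm (f := fun i => f (i + (n+1)))
        (by simpa [Real.norm_eq_abs] using habs)
  have h2 : ∑' i, |f (i + (n+1))| ≤ ∑' i : ℕ, (((i + (n+1) : ℕ) : ℝ) ^ 2)⁻¹ := by
    refine Summable.tsum_le_tsum (fun i => ?_) habs hg
    have hi : (0:ℝ) < ((i + (n+1) : ℕ) : ℝ) ^ 2 := by positivity
    rw [hf]
    rw [abs_div, abs_of_pos hi, div_le_iff₀ hi, inv_mul_cancel₀ hi.ne']
    exact_mod_cast (abs_moebius_le_one : |μ (i + (n+1))| ≤ 1)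
  have h3 : ∑' i : ℕ, (((i + (n+1) : ℕ) : ℝ) ^ 2)⁻¹ ≤ (1 : ℝ) / n := by
    apply Summable.tsum_le_of_sum_le hg
    intro s
    obtain ⟨m, hm⟩ := s.exists_nat_subset_range
    calc ∑ i ∈ s, (((i + (n+1) : ℕ) : ℝ) ^ 2)⁻¹
        ≤ ∑ i ∈ range m, (((i + (n+1) : ℕ) : ℝ) ^ 2)⁻¹ := by
          apply Finset.sum_le_sum_of_subset_of_nonneg hm
          intro i _ _; positivity
      _ = ∑ j ∈ Ico (n+1) (n+1+m), ((j : ℝ) ^ 2)⁻¹ := by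
          rw [Finset.sum_Ico_eq_sum_range]
          simp only [Nat.add_sub_cancel_left]
          exact Finset.sum_congr rfl (fun i _ => by rw [Nat.add_comm])
      _ = ∑ j ∈ Ioc n (n+m), ((j : ℝ) ^ 2)⁻¹ := by
          congr 1
          rw [show n+1+m = (n+m)+1 by omega]
          exact Finset.Ico_add_one_add_one_eq_Ioc _ _
      _ ≤ (n : ℝ)⁻¹ - ((n+m : ℕ) : ℝ)⁻¹ :=
          sum_Ioc_inv_sq_le_sub (by omega) (by omega)
      _ ≤ (1 : ℝ) / n := by
          rw [one_div]
          have : (0:ℝ) ≤ ((n+m : ℕ) : ℝ)⁻¹ := by positivity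
          linarith
  exact le_trans h1 (le_trans h2 h3)

/-- `∑_{j=1}^{n} φ(j) = 3n²/π² + O(n log n)`: there is a constant `C` such that
`|∑_{j≤n} φ(j) − 3n²/π²| ≤ C·n·log(n+1)` for all `n ≥ 1`. -/
theorem totient_sum_asymptotic :
    ∃ C : ℝ, ∀ n : ℕ, 1 ≤ n →
      |(∑ j ∈ Finset.Icc 1 n, (Nat.totient j : ℝ)) - 3 * (n : ℝ) ^ 2 / Real.pi ^ 2|
        ≤ C * n * Real.log (n + 1) := by
  refine ⟨5, fun n hn => ?_⟩
  have hn0 : (0:ℝ) < n := by exact_mod_cast hn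
  -- Step 0 : rewrite the sum
  have hS : (∑ j ∈ Icc 1 n, (Nat.totient j : ℝ))
      = ∑ d ∈ Icc 1 n, (μ d : ℝ) * (((n/d : ℕ) : ℝ) * ((n/d : ℕ) + 1) / 2) := by
    rw [Finset.sum_congr rfl (fun j hj =>
      totient_moebius_real (by simp only [mem_Icc] at hj; omega)),
      swap_sum n (fun x => (μ x.1 : ℝ) * x.2)]
    refine Finset.sum_congr rfl (fun d hd => ?_)
    have hrfl : ∑ q ∈ Icc 1 (n/d), (μ (d, q).1 : ℝ) * ((d, q).2 : ℕ)
        = ∑ q ∈ Icc 1 (n/d), (μ d : ℝ) * q := rfl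
    rw [hrfl, ← Finset.mul_sum, gauss_sum_real]
  set A : ℝ := ∑ d ∈ Icc 1 n, (μ d : ℝ) * ((n : ℝ) / d) ^ 2 / 2 with hA
  -- Step 1 : |S - A| ≤ ∑ n/d
  have step1 : |(∑ j ∈ Icc 1 n, (Nat.totient j : ℝ)) - A|
      ≤ ∑ d ∈ Icc 1 n, (n : ℝ) / d := by
    rw [hS, hA, ← Finset.sum_sub_distrib]
    refine (Finset.abs_sum_le_sum_abs _ _).trans (Finset.sum_le_sum fun d hd => ?_)
    simp only [mem_Icc] at hd
    have hd0 : (0:ℝ) < d := by exact_mod_cast hd.1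
    set m : ℕ := n / d with hm
    set x : ℝ := (n : ℝ) / d with hx
    have hmx : (m : ℝ) ≤ x := by
      rw [hx, le_div_iff₀ hd0]
      exact_mod_cast Nat.div_mul_le_self n d
    have hxm : x < (m : ℝ) + 1 := by
      rw [hx, div_lt_iff₀ hd0]
      have := Nat.lt_mul_div_succ n (hd.1 : 1 ≤ d)
      calc (n:ℝ) < ((d * (n/d + 1) : ℕ) : ℝ) := by exact_mod_cast this
        _ = ((m:ℝ) + 1) * d := by push_cast [hm]; ring
    have hx1 : (1:ℝ) ≤ x := by
      rw [hx, le_div_iff₀ hd0, one_mul]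
      exact_mod_cast hd.2
    have hmu : |(μ d : ℝ)| ≤ 1 := by exact_mod_cast (abs_moebius_le_one : |μ d| ≤ 1)
    have key : |(m : ℝ) * ((m : ℝ) + 1) / 2 - x ^ 2 / 2| ≤ x := by
      rw [abs_le]
      constructor <;> nlinarith [hmx, hxm, hx1]
    calc |(μ d : ℝ) * ((m : ℝ) * ((m:ℝ) + 1) / 2) - (μ d : ℝ) * x ^ 2 / 2|
        = |(μ d : ℝ)| * |(m : ℝ) * ((m:ℝ) + 1) / 2 - x ^ 2 / 2| := by
          rw [← abs_mul]; ring_nf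
      _ ≤ 1 * x := mul_le_mul hmu key (abs_nonneg _) zero_le_one
      _ = x := one_mul x
  -- Step 2 : harmonic bound
  have step2 : ∑ d ∈ Icc 1 n, (n : ℝ) / d ≤ n * (1 + Real.log (n + 1)) := by
    have h1 : ∑ d ∈ Icc 1 n, (n : ℝ) / d = n * ∑ d ∈ Icc 1 n, ((d : ℝ))⁻¹ := by
      rw [Finset.mul_sum]
      exact Finset.sum_congr rfl (fun d _ => by rw [div_eq_mul_inv])
    have h2 : ∑ d ∈ Icc 1 n, ((d : ℝ))⁻¹ = ((harmonic n : ℚ) : ℝ) := by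
      rw [harmonic_eq_sum_Icc]
      push_cast
      rfl
    have h3 := harmonic_le_one_add_log n
    have h4 : Real.log n ≤ Real.log (n + 1) :=
      Real.log_le_log hn0 (by linarith)
    have h5 : ((harmonic n : ℚ) : ℝ) ≤ 1 + Real.log (n + 1) := by linarith
    rw [h1, h2]
    exact mul_le_mul_of_nonneg_left h5 hn0.le
  -- Step 3 : |A - 3n²/π²| ≤ n
  have step3 : |A - 3 * (n : ℝ) ^ 2 / π ^ 2| ≤ (n : ℝ) := by
    have hAeq : A = (n : ℝ) ^ 2 / 2 * ∑ d ∈ Icc 1 n, (μ d : ℝ) / (d : ℝ) ^ 2 := by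
      rw [hA, Finset.mul_sum]
      refine Finset.sum_congr rfl (fun d hd => ?_)
      simp only [mem_Icc] at hd
      have hd0 : (d:ℝ) ≠ 0 := by
        have : (0:ℝ) < d := by exact_mod_cast hd.1
        exact this.ne'
      field_simp
    have h3eq : 3 * (n : ℝ) ^ 2 / π ^ 2 = (n : ℝ) ^ 2 / 2 * (6 / π ^ 2) := by
      have : (π:ℝ) ≠ 0 := Real.pi_ne_zero
      field_simp
      ring
    rw [hAeq, h3eq, ← mul_sub, abs_mul, abs_of_nonneg (by positivity : (0:ℝ) ≤ (n:ℝ)^2/2)]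
    calc (n : ℝ)^2/2 * |(∑ d ∈ Icc 1 n, (μ d : ℝ) / (d : ℝ) ^ 2) - 6 / π ^ 2|
        ≤ (n : ℝ)^2/2 * ((1:ℝ)/n) := by
          gcongr
          exact tail_bound n hn
      _ ≤ (n : ℝ) := by
          rw [div_mul_div_comm, div_le_iff₀ (by positivity : (0:ℝ) < 2 * n)]
          nlinarith
  -- combine
  have hlog2 : (0.6931471803 : ℝ) < Real.log 2 := Real.log_two_gt_d9
  have hlog : Real.log 2 ≤ Real.log (n + 1) := by
    apply Real.log_le_log (by norm_num)
    have : (1:ℝ) ≤ n := by exact_mod_cast hn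
    linarith
  have hfinal : |(∑ j ∈ Icc 1 n, (Nat.totient j : ℝ)) - 3 * (n : ℝ) ^ 2 / π ^ 2|
      ≤ n * (2 + Real.log (n + 1)) := by
    have := abs_sub_abs_le_abs_sub (0:ℝ) (0:ℝ)
    calc |(∑ j ∈ Icc 1 n, (Nat.totient j : ℝ)) - 3 * (n : ℝ) ^ 2 / π ^ 2|
        ≤ |(∑ j ∈ Icc 1 n, (Nat.totient j : ℝ)) - A| + |A - 3 * (n : ℝ) ^ 2 / π ^ 2| :=
          abs_sub_le _ _ _
      _ ≤ n * (1 + Real.log (n + 1)) + n := add_le_add (step1.trans step2) step3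
      _ = n * (2 + Real.log (n + 1)) := by ring
  refine hfinal.trans ?_
  have hL : (0:ℝ) < Real.log (n + 1) := by linarith
  nlinarith [hlog, hlog2, hn0, hL]
end

section
/- For any finite graph G = (V, E), the infinite product A_G = ∏_{p prime} Q_G(1/p) converges to a strictly positive real number. -/
/-- The number of independent sets of size `m` in the graph `G`
(sets of pairwise non-adjacent vertices). -/
noncomputable def indepCount {V : Type} (G : SimpleGraph V) (m : ℕ) : ℕ :=
  Nat.card {s : Finset V // s.card = m ∧ ∀ u ∈ s, ∀ v ∈ s, ¬ G.Adj u v}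

/-- The polynomial `Q_G(z) = ∑_m i_m(G) (1−z)^{|V|−m} z^m`. -/
noncomputable def QG {V : Type} (G : SimpleGraph V) (z : ℝ) : ℝ :=
  ∑ m ∈ Finset.range (Nat.card V + 1),
    (indepCount G m : ℝ) * (1 - z) ^ (Nat.card V - m) * z ^ m

open Filter

/-!
Expanding `(z + (1 - z)) ^ |V| = 1` over all vertex subsets `s` shows that `1 - Q_G(z)` is the total
binomial weight `z ^ |s| (1 - z) ^ (|V| - |s|)` of the sets `s` that are not independent. Each of them
has at least two vertices, so `0 ≤ 1 - Q_G(z) ≤ 2 ^ |V| z ^ 2` on `[0, 1]`. Hence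
`∑_p (1 - Q_G(1/p))` converges, therefore so does `∑_p log Q_G(1/p)`, and the product over primes
is the exponential of that sum, which is positive.
-/

open Finset

namespace SimpleGraph

variable {V : Type} (G : SimpleGraph V)

lemma two_le_card_of_not_isIndepSet {s : Finset V} (h : ¬G.IsIndepSet (s : Set V)) : 2 ≤ #s := by
  simp only [isIndepSet_iff, Set.Pairwise, not_forall] at h
  obtain ⟨u, hu, v, hv, huv, -⟩ := h
  exact one_lt_card.2 ⟨u, hu, v, hv, huv⟩

variable [Fintype V]

section Decidable

variable [DecidableEq V] [DecidableRel G.Adj]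

def indepFinsets : Finset (Finset V) := {s | G.IsIndepSet (s : Set V)}

@[simp]
lemma mem_indepFinsets {s : Finset V} : s ∈ G.indepFinsets ↔ G.IsIndepSet (s : Set V) := by
  simp [indepFinsets]

lemma indepCount_eq_card_indepSetFinset (m : ℕ) : indepCount G m = #(G.indepSetFinset m) := by
  rw [indepCount, Nat.card_eq_fintype_card, Fintype.card_subtype]
  congr 1
  ext s
  simp only [mem_filter, mem_univ, true_and, mem_indepSetFinset_iff, isNIndepSet_iff,
    isIndepSet_iff, Set.Pairwise, mem_coe]
  exact ⟨fun ⟨hm, h⟩ => ⟨fun u hu v hv _ => h u hu v hv, hm⟩,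
    fun ⟨h, hm⟩ => ⟨hm, fun u hu v hv huv => h hu hv (G.ne_of_adj huv) huv⟩⟩

lemma QG_eq_sum_indepFinsets (z : ℝ) :
    QG G z = ∑ s ∈ G.indepFinsets, z ^ #s * (1 - z) ^ (Fintype.card V - #s) := by
  rw [← sum_fiberwise_of_maps_to (g := card) (t := range (Fintype.card V + 1))
    fun s _ => mem_range_succ_iff.2 s.card_le_univ, QG, Nat.card_eq_fintype_card]
  refine sum_congr rfl fun m _ => ?_
  have hfiber : {s ∈ G.indepFinsets | #s = m} = G.indepSetFinset m := by
    ext s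
    simp [mem_indepSetFinset_iff, isNIndepSet_iff]
  rw [hfiber, sum_congr rfl fun s hs => by rw [((G.mem_indepSetFinset_iff).1 hs).card_eq],
    sum_const, indepCount_eq_card_indepSetFinset, nsmul_eq_mul]
  ring

lemma one_sub_QG_eq_sum_sdiff_indepFinsets (z : ℝ) :
    1 - QG G z = ∑ s ∈ univ \ G.indepFinsets, z ^ #s * (1 - z) ^ (Fintype.card V - #s) := by
  have htotal := Fintype.sum_pow_mul_eq_add_pow V z (1 - z)
  rw [add_sub_cancel, one_pow, ← sum_sdiff (subset_univ G.indepFinsets)] at htotal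
  rw [QG_eq_sum_indepFinsets]
  linarith

end Decidable

lemma QG_pos {z : ℝ} (h0 : 0 ≤ z) (h1 : z < 1) : 0 < QG G z := by
  classical
  have h1' : 0 ≤ 1 - z := sub_nonneg.2 h1.le
  rw [QG_eq_sum_indepFinsets]
  refine lt_of_lt_of_le ?_ (single_le_sum (fun s _ => by positivity)
    ((G.mem_indepFinsets (s := ∅)).2 (by simp)))
  simpa using pow_pos (sub_pos.2 h1) _

lemma abs_QG_sub_one_le {z : ℝ} (h0 : 0 ≤ z) (h1 : z ≤ 1) :
    |QG G z - 1| ≤ 2 ^ Fintype.card V * z ^ 2 := by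
  classical
  have h1' : 0 ≤ 1 - z := sub_nonneg.2 h1
  rw [abs_sub_comm, one_sub_QG_eq_sum_sdiff_indepFinsets,
    abs_of_nonneg (sum_nonneg fun s _ => by positivity)]
  calc ∑ s ∈ univ \ G.indepFinsets, z ^ #s * (1 - z) ^ (Fintype.card V - #s)
      ≤ ∑ _s ∈ univ \ G.indepFinsets, z ^ 2 := sum_le_sum fun s hs =>
        (mul_le_of_le_one_right (by positivity) (pow_le_one₀ h1' (sub_le_self 1 h0))).trans
          (pow_le_pow_of_le_one h0 h1 (G.two_le_card_of_not_isIndepSet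
            (by simpa using (mem_sdiff.1 hs).2)))
    _ ≤ ∑ _s : Finset V, z ^ 2 :=
        sum_le_sum_of_subset_of_nonneg sdiff_subset fun _ _ _ => by positivity
    _ = 2 ^ Fintype.card V * z ^ 2 := by simp [Fintype.card_finset]

end SimpleGraph

lemma exists_pos_tendsto_prod_range_of_summable_sub_one {f : ℕ → ℝ} (hpos : ∀ n, 0 < f n)
    (hf : Summable fun n => f n - 1) :
    ∃ L, 0 < L ∧ Tendsto (fun N => ∏ n ∈ range N, f n) atTop (nhds L) := by
  have hlog : Summable fun n => Real.log (f n) := by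
    simpa using Real.summable_log_one_add_of_summable hf
  exact ⟨_, Real.exp_pos _, (Real.hasProd_of_hasSum_log hpos hlog.hasSum).tendsto_prod_nat⟩

/-- For any finite graph `G`, the infinite product `A_G = ∏_{p prime} Q_G(1/p)`
converges to a strictly positive real number. -/
theorem prod_QG_primes_converges {V : Type} [Fintype V] (G : SimpleGraph V) :
    ∃ L : ℝ, 0 < L ∧
      Tendsto (fun N : ℕ =>
          ∏ p ∈ (Finset.range N).filter Nat.Prime, QG G (1 / (p : ℝ)))
        atTop (nhds L) := by
  set f : ℕ → ℝ := fun n => if n.Prime then QG G (1 / n) else 1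
  have hinv : ∀ p : ℕ, p.Prime → 0 ≤ 1 / (p : ℝ) ∧ 1 / (p : ℝ) < 1 := fun p hp =>
    ⟨by positivity, (div_lt_one (by exact_mod_cast hp.pos)).2 (by exact_mod_cast hp.one_lt)⟩
  have hpos : ∀ n, 0 < f n := fun n => by
    by_cases hn : n.Prime
    · simpa [f, hn] using G.QG_pos (hinv n hn).1 (hinv n hn).2
    · simp [f, hn]
  have hsum : Summable fun n => f n - 1 := by
    refine ((Real.summable_one_div_nat_pow.2 one_lt_two).mul_left
      (2 ^ Fintype.card V)).of_norm_bounded fun n => ?_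
    by_cases hn : n.Prime
    · simpa [f, hn] using G.abs_QG_sub_one_le (hinv n hn).1 (hinv n hn).2.le
    · simp [f, hn]
  simpa only [prod_filter] using exists_pos_tendsto_prod_range_of_summable_sub_one hpos hsum
end

section
/- Let X_1, ..., X_k be independent random variables each uniformly distributed on [n], and let G be a graph on vertices {1,...,k} with edge set E. Then P(gcd(X_i, X_j) = 1 for all edges (i,j) ∈ E) → ∏_{p prime} Q_G(1/p) as n → ∞. -/
set_option maxHeartbeats 1000000

open Filter

open Finset

lemma crt_count (k a b : ℕ) (ha : 0 < a) (hb : 0 < b) (hab : Nat.Coprime a b)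
    (P1 P2 : (Fin k → ℕ) → Prop) [DecidablePred P1] [DecidablePred P2]
    (h1 : ∀ r r' : Fin k → ℕ, (∀ i, r i % a = r' i % a) → (P1 r ↔ P1 r'))
    (h2 : ∀ r r' : Fin k → ℕ, (∀ i, r i % b = r' i % b) → (P2 r ↔ P2 r')) :
    ((Fintype.piFinset fun _ : Fin k => range (a*b)).filter (fun r => P1 r ∧ P2 r)).card
      = ((Fintype.piFinset fun _ : Fin k => range a).filter P1).card *
        ((Fintype.piFinset fun _ : Fin k => range b).filter P2).card := by
  have keya : ∀ u v : ℕ, ((Nat.chineseRemainder hab u v : ℕ) % (a*b)) % a = u % a := by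
    intro u v
    rw [Nat.mod_mod_of_dvd _ ⟨b, rfl⟩]
    exact (Nat.chineseRemainder hab u v).2.1
  have keyb : ∀ u v : ℕ, ((Nat.chineseRemainder hab u v : ℕ) % (a*b)) % b = v % b := by
    intro u v
    rw [Nat.mod_mod_of_dvd _ ⟨a, mul_comm a b⟩]
    exact (Nat.chineseRemainder hab u v).2.2
  rw [← Finset.card_product, ← Finset.filter_product]
  apply Finset.card_bij' (fun r _ => ((fun i => r i % a), (fun i => r i % b)))
    (fun uv _ => fun i => (Nat.chineseRemainder hab (uv.1 i) (uv.2 i) : ℕ) % (a*b))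
  · intro r hr
    simp only [Finset.mem_filter, Finset.mem_product, Fintype.mem_piFinset, mem_range] at hr ⊢
    exact ⟨⟨fun i => Nat.mod_lt _ ha, fun i => Nat.mod_lt _ hb⟩,
      (h1 _ _ (fun i => Nat.mod_mod_of_dvd _ dvd_rfl)).mpr hr.2.1,
      (h2 _ _ (fun i => Nat.mod_mod_of_dvd _ dvd_rfl)).mpr hr.2.2⟩
  · intro uv huv
    simp only [Finset.mem_filter, Finset.mem_product, Fintype.mem_piFinset, mem_range] at huv ⊢
    refine ⟨fun i => Nat.mod_lt _ (mul_pos ha hb), ?_, ?_⟩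
    · exact (h1 _ _ (fun i => by rw [keya])).mpr huv.2.1
    · exact (h2 _ _ (fun i => by rw [keyb])).mpr huv.2.2
  · intro r hr
    simp only [Finset.mem_filter, Fintype.mem_piFinset, mem_range] at hr
    funext i
    have h1a : ((Nat.chineseRemainder hab (r i % a) (r i % b) : ℕ) % (a*b)) % a = r i % a := by
      rw [keya, Nat.mod_mod_of_dvd _ dvd_rfl]
    have h1b : ((Nat.chineseRemainder hab (r i % a) (r i % b) : ℕ) % (a*b)) % b = r i % b := by
      rw [keyb, Nat.mod_mod_of_dvd _ dvd_rfl]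
    have := (Nat.modEq_and_modEq_iff_modEq_mul hab).mp ⟨h1a, h1b⟩
    simpa [Nat.ModEq, Nat.mod_eq_of_lt (hr.1 i),
      Nat.mod_eq_of_lt (Nat.mod_lt _ (mul_pos ha hb) :
        (Nat.chineseRemainder hab (r i % a) (r i % b) : ℕ) % (a*b) < a*b)] using this
  · intro uv huv
    simp only [Finset.mem_filter, Finset.mem_product, Fintype.mem_piFinset, mem_range] at huv
    refine Prod.ext (funext fun i => ?_) (funext fun i => ?_) <;> dsimp only
    · rw [keya]; exact Nat.mod_eq_of_lt (huv.1.1 i)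
    · rw [keyb]; exact Nat.mod_eq_of_lt (huv.1.2 i)

lemma prime_count_prod (k : ℕ) (G : SimpleGraph (Fin k)) [DecidableRel G.Adj]
    (S : Finset ℕ) (hS : ∀ p ∈ S, p.Prime) :
    ((Fintype.piFinset fun _ : Fin k => range (∏ p ∈ S, p)).filter
      (fun r => ∀ p ∈ S, ∀ i j, G.Adj i j → ¬(p ∣ r i ∧ p ∣ r j))).card
    = ∏ p ∈ S, ((Fintype.piFinset fun _ : Fin k => range p).filter
        (fun r => ∀ i j, G.Adj i j → ¬(p ∣ r i ∧ p ∣ r j))).card := by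
  classical
  have dvd_invar : ∀ (d m : ℕ), d ∣ m → ∀ r r' : Fin k → ℕ, (∀ i, r i % m = r' i % m) →
      ∀ i, (d ∣ r i ↔ d ∣ r' i) := fun d m hdm r r' h i => by
    rw [← Nat.dvd_mod_iff hdm, h i, Nat.dvd_mod_iff hdm]
  revert hS
  induction S using Finset.induction with
  | empty => simp
  | @insert p S hp ih =>
    intro hS
    have hp' : p.Prime := hS p (mem_insert_self _ _)
    have hSq : ∀ q ∈ S, q.Prime := fun q hq => hS q (mem_insert_of_mem hq)
    have hM' : 0 < ∏ q ∈ S, q := prod_pos fun q hq => (hSq q hq).pos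
    have hcop : Nat.Coprime p (∏ q ∈ S, q) :=
      Nat.Coprime.prod_right fun q hq =>
        (Nat.coprime_primes hp' (hSq q hq)).mpr (fun h => hp (h ▸ hq))
    rw [prod_insert hp, prod_insert hp]
    simp only [Finset.forall_mem_insert]
    rw [crt_count k p (∏ q ∈ S, q) hp'.pos hM' hcop
      (fun r => ∀ i j, G.Adj i j → ¬(p ∣ r i ∧ p ∣ r j))
      (fun r => ∀ q ∈ S, ∀ i j, G.Adj i j → ¬(q ∣ r i ∧ q ∣ r j))
      (fun r r' h => forall_congr' fun i => forall_congr' fun j => imp_congr Iff.rfl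
        (not_congr (and_congr (dvd_invar p p dvd_rfl r r' h i) (dvd_invar p p dvd_rfl r r' h j))))
      (fun r r' h => forall₂_congr fun q hq => forall_congr' fun i => forall_congr' fun j =>
        imp_congr Iff.rfl (not_congr (and_congr
          (dvd_invar q _ (dvd_prod_of_mem _ hq) r r' h i)
          (dvd_invar q _ (dvd_prod_of_mem _ hq) r r' h j))))]
    rw [ih hSq]
lemma resCount_eq (k : ℕ) (G : SimpleGraph (Fin k)) [DecidableRel G.Adj]
    (q : ℕ) (hq : q.Prime) :
    ((Fintype.piFinset fun _ : Fin k => range q).filter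
        (fun r => ∀ i j, G.Adj i j → ¬(q ∣ r i ∧ q ∣ r j))).card
      = ∑ m ∈ range (k+1), indepCount G m * (q-1)^(k-m) := by
  classical
  set Ind : Finset (Fin k) → Prop := fun s => ∀ u ∈ s, ∀ v ∈ s, ¬ G.Adj u v with hInd
  set zs : (Fin k → ℕ) → Finset (Fin k) := fun r => univ.filter (fun i => q ∣ r i) with hzs
  rw [Finset.card_eq_sum_card_fiberwise (f := zs) (t := univ.filter Ind)
    (fun r hr => by
      simp only [Finset.mem_coe, Finset.mem_filter, Fintype.mem_piFinset, mem_range] at hr ⊢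
      exact ⟨mem_univ _, fun u hu v hv hadj => by
        simp only [hzs, Finset.mem_filter] at hu hv
        exact hr.2 u v hadj ⟨hu.2, hv.2⟩⟩)]
  -- fibers
  have fib : ∀ t ∈ univ.filter Ind,
      (((Fintype.piFinset fun _ : Fin k => range q).filter
        (fun r => ∀ i j, G.Adj i j → ¬(q ∣ r i ∧ q ∣ r j))).filter (fun r => zs r = t)).card
      = (q-1)^(k - t.card) := by
    intro t ht
    simp only [Finset.mem_filter] at ht
    have htInd : Ind t := ht.2
    have : (((Fintype.piFinset fun _ : Fin k => range q).filter
        (fun r => ∀ i j, G.Adj i j → ¬(q ∣ r i ∧ q ∣ r j))).filter (fun r => zs r = t))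
        = Fintype.piFinset (fun i : Fin k => (range q).filter (fun x => q ∣ x ↔ i ∈ t)) := by
      ext r
      simp only [Finset.mem_filter, Fintype.mem_piFinset, mem_range]
      constructor
      · rintro ⟨⟨hlt, -⟩, hz⟩
        refine fun i => ⟨hlt i, ?_⟩
        rw [← hz]
        simp [hzs]
      · intro h
        have hz : zs r = t := by
          ext i
          simp only [hzs, Finset.mem_filter, mem_univ, true_and]
          exact (h i).2
        refine ⟨⟨fun i => (h i).1, fun i j hadj hdvd => ?_⟩, hz⟩
        exact htInd i (by rw [← hz]; simp [hzs, hdvd.1]) j (by rw [← hz]; simp [hzs, hdvd.2]) hadj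
    rw [this, Fintype.card_piFinset]
    have hcard : ∀ i : Fin k, ((range q).filter (fun x => q ∣ x ↔ i ∈ t)).card
        = if i ∈ t then 1 else q - 1 := by
      intro i
      have h0 : (range q).filter (fun x => q ∣ x) = {0} := by
        ext x
        simp only [Finset.mem_filter, mem_range, Finset.mem_singleton]
        exact ⟨fun ⟨hlt, hdvd⟩ => Nat.eq_zero_of_dvd_of_lt hdvd hlt,
          fun hx => ⟨hx ▸ hq.pos, hx ▸ dvd_zero q⟩⟩
      by_cases h : i ∈ t
      · rw [if_pos h]
        have h1 : (range q).filter (fun x => q ∣ x ↔ i ∈ t) = {0} := by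
          ext x
          simp only [Finset.mem_filter, mem_range, Finset.mem_singleton]
          constructor
          · rintro ⟨hlt, hdvd⟩; exact Nat.eq_zero_of_dvd_of_lt (hdvd.mpr h) hlt
          · rintro rfl; exact ⟨hq.pos, iff_of_true (dvd_zero q) h⟩
        rw [h1, Finset.card_singleton]
      · rw [if_neg h]
        have h1 : (range q).filter (fun x => q ∣ x ↔ i ∈ t)
            = (range q).filter (fun x => ¬ q ∣ x) :=
          Finset.filter_congr fun x _ => by simp [h]
        rw [h1, Finset.filter_not, Finset.card_sdiff_of_subset (Finset.filter_subset _ _), h0,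
          Finset.card_singleton, Finset.card_range]
    rw [Finset.prod_congr rfl fun i _ => hcard i,
      Finset.prod_ite (fun _ => 1) (fun _ => q - 1), Finset.prod_const, Finset.prod_const,
      one_pow, one_mul]
    congr 1
    have hcompl : univ.filter (fun i : Fin k => ¬ i ∈ t) = tᶜ := by
      ext i; simp
    rw [hcompl, Finset.card_compl, Fintype.card_fin]
  rw [Finset.sum_congr rfl fib]
  -- group by cardinality
  rw [← Finset.sum_fiberwise_of_maps_to (g := Finset.card) (t := range (k+1))
    (fun t ht => by
      simp only [mem_range]
      exact Nat.lt_succ_of_le (le_trans (Finset.card_le_univ t) (by simp)))]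
  refine Finset.sum_congr rfl fun m hm => ?_
  have : ∀ t ∈ (univ.filter Ind).filter (fun t => t.card = m), (q-1)^(k - t.card) = (q-1)^(k-m) := by
    intro t ht
    simp only [Finset.mem_filter] at ht
    rw [ht.2]
  rw [Finset.sum_congr rfl this, Finset.sum_const, smul_eq_mul]
  congr 1
  rw [indepCount, Nat.card_eq_fintype_card, Fintype.card_subtype]
  congr 1
  rw [Finset.filter_filter]
  exact Finset.filter_congr fun s _ => by rw [and_comm]
lemma QG_prime (k : ℕ) (G : SimpleGraph (Fin k)) (q : ℕ) (hq : q.Prime) :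
    QG G (1 / (q:ℝ)) = ((∑ m ∈ range (k+1), indepCount G m * (q-1)^(k-m) : ℕ) : ℝ) / (q:ℝ)^k := by
  have hq0 : (0:ℝ) < q := by exact_mod_cast hq.pos
  rw [QG, Nat.card_eq_fintype_card, Fintype.card_fin]
  push_cast [Nat.cast_sub hq.one_lt.le]
  rw [Finset.sum_div]
  refine Finset.sum_congr rfl fun m hm => ?_
  rw [mem_range] at hm
  have hmk : m ≤ k := Nat.lt_succ_iff.mp hm
  have key : (q:ℝ)^(k-m) * (q:ℝ)^m = (q:ℝ)^k := pow_sub_mul_pow _ hmk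
  have h1 : (1 : ℝ) - 1/q = ((q:ℝ)-1)/q := by field_simp
  rw [h1, div_pow, one_div, inv_pow, ← key]
  have hne : (q:ℝ) ^ (k-m) ≠ 0 := pow_ne_zero _ hq0.ne'
  have hne2 : (q:ℝ) ^ m ≠ 0 := pow_ne_zero _ hq0.ne'
  field_simp

lemma QG_prime' (k : ℕ) (G : SimpleGraph (Fin k)) [DecidableRel G.Adj]
    (q : ℕ) (hq : q.Prime) :
    QG G (1 / (q:ℝ)) = (((Fintype.piFinset fun _ : Fin k => range q).filter
        (fun r => ∀ i j, G.Adj i j → ¬(q ∣ r i ∧ q ∣ r j))).card : ℝ) / (q:ℝ)^k := by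
  rw [QG_prime k G q hq, ← resCount_eq k G q hq]

lemma prod_QG (k : ℕ) (G : SimpleGraph (Fin k)) [DecidableRel G.Adj]
    (S : Finset ℕ) (hS : ∀ p ∈ S, p.Prime) :
    ∏ p ∈ S, QG G (1 / (p:ℝ))
      = (((Fintype.piFinset fun _ : Fin k => range (∏ p ∈ S, p)).filter
          (fun r => ∀ p ∈ S, ∀ i j, G.Adj i j → ¬(p ∣ r i ∧ p ∣ r j))).card : ℝ)
        / ((∏ p ∈ S, p : ℕ) : ℝ)^k := by
  classical
  rw [prime_count_prod k G S hS]
  rw [Finset.prod_congr rfl fun p hp => QG_prime' k G p (hS p hp)]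
  rw [Finset.prod_div_distrib]
  push_cast
  rw [← Finset.prod_pow]

lemma count_res_lower (n M v : ℕ) (hM : 0 < M) (hv : v < M) :
    n / M ≤ ((Icc 1 n).filter (fun x => x % M = v)).card := by
  classical
  have := Finset.card_range (n / M)
  rw [← this]
  apply Finset.card_le_card_of_injOn (fun t => M * t + (if v = 0 then M else v))
  · intro t ht
    rw [Finset.mem_coe, mem_range] at ht
    have hr1 : 1 ≤ (if v = 0 then M else v) := by split <;> omega
    have hrM : (if v = 0 then M else v) ≤ M := by split <;> omega
    have hle : M * t + (if v = 0 then M else v) ≤ n := by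
      have h1 : M * t + (if v = 0 then M else v) ≤ M * (t + 1) := by
        rw [Nat.mul_succ]; omega
      have h2 : M * (t+1) ≤ M * (n / M) := Nat.mul_le_mul_left M ht
      have h3 : M * (n / M) ≤ n := Nat.mul_div_le n M
      omega
    simp only [Finset.mem_coe, Finset.mem_filter, Finset.mem_Icc]
    refine ⟨⟨by omega, hle⟩, ?_⟩
    rw [add_comm, Nat.add_mul_mod_self_left]
    split
    · rename_i h0; rw [Nat.mod_self]; omega
    · exact Nat.mod_eq_of_lt hv
  · intro t ht t' ht' h
    dsimp only at h
    have : M * t = M * t' := by omega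
    exact Nat.eq_of_mul_eq_mul_left hM this

lemma count_res_upper (n M v : ℕ) (hM : 0 < M) :
    ((Icc 1 n).filter (fun x => x % M = v)).card ≤ n / M + 1 := by
  classical
  have := Finset.card_range (n / M + 1)
  rw [← this]
  apply Finset.card_le_card_of_injOn (fun x => x / M)
  · intro x hx
    simp only [Finset.mem_coe, Finset.mem_filter, Finset.mem_Icc] at hx
    rw [Finset.mem_coe, mem_range]
    exact Nat.lt_succ_of_le (Nat.div_le_div_right hx.1.2)
  · intro x hx y hy h
    simp only [coe_filter, Finset.mem_Icc, Set.mem_setOf_eq] at hx hy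
    have hx2 := Nat.div_add_mod x M
    have hy2 := Nat.div_add_mod y M
    dsimp only at h
    have e1 : x % M = y % M := by rw [hx.2, hy.2]
    rw [h] at hx2
    omega
lemma count_decompose (k : ℕ) (G : SimpleGraph (Fin k)) [DecidableRel G.Adj]
    (S : Finset ℕ) (hS : ∀ p ∈ S, p.Prime) (n : ℕ) :
    ((Fintype.piFinset fun _ : Fin k => Icc 1 n).filter
        (fun x => ∀ p ∈ S, ∀ i j, G.Adj i j → ¬(p ∣ x i ∧ p ∣ x j))).card
      = ∑ r ∈ (Fintype.piFinset fun _ : Fin k => range (∏ p ∈ S, p)).filter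
          (fun r => ∀ p ∈ S, ∀ i j, G.Adj i j → ¬(p ∣ r i ∧ p ∣ r j)),
          ∏ i : Fin k, ((Icc 1 n).filter (fun x => x % (∏ p ∈ S, p) = r i)).card := by
  classical
  set M := ∏ p ∈ S, p with hMdef
  have hM : 0 < M := prod_pos fun p hp => (hS p hp).pos
  have hdvd : ∀ p ∈ S, p ∣ M := fun p hp => dvd_prod_of_mem _ hp
  rw [Finset.card_eq_sum_card_fiberwise (f := fun x (i : Fin k) => x i % M)
    (t := (Fintype.piFinset fun _ : Fin k => range M).filter
      (fun r => ∀ p ∈ S, ∀ i j, G.Adj i j → ¬(p ∣ r i ∧ p ∣ r j)))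
    (fun x hx => by
      simp only [Finset.mem_coe, Finset.mem_filter, Fintype.mem_piFinset, mem_range] at hx ⊢
      refine ⟨fun i => Nat.mod_lt _ hM, fun p hp i j hadj hd => ?_⟩
      exact hx.2 p hp i j hadj
        ⟨(Nat.dvd_mod_iff (hdvd p hp)).mp hd.1, (Nat.dvd_mod_iff (hdvd p hp)).mp hd.2⟩)]
  refine Finset.sum_congr rfl fun r hr => ?_
  simp only [Finset.mem_filter, Fintype.mem_piFinset, mem_range] at hr
  have : (((Fintype.piFinset fun _ : Fin k => Icc 1 n).filter
        (fun x => ∀ p ∈ S, ∀ i j, G.Adj i j → ¬(p ∣ x i ∧ p ∣ x j))).filter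
        (fun x => (fun i => x i % M) = r))
      = Fintype.piFinset (fun i : Fin k => (Icc 1 n).filter (fun x => x % M = r i)) := by
    ext x
    simp only [Finset.mem_filter, Fintype.mem_piFinset, funext_iff]
    constructor
    · rintro ⟨⟨hmem, -⟩, hz⟩
      exact fun i => ⟨hmem i, hz i⟩
    · intro h
      refine ⟨⟨fun i => (h i).1, fun p hp i j hadj hd => ?_⟩, fun i => (h i).2⟩
      refine hr.2 p hp i j hadj ⟨?_, ?_⟩
      · rw [← (h i).2]; exact (Nat.dvd_mod_iff (hdvd p hp)).mpr hd.1
      · rw [← (h j).2]; exact (Nat.dvd_mod_iff (hdvd p hp)).mpr hd.2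
  rw [this, Fintype.card_piFinset]

open Filter in
lemma countS_tendsto (k : ℕ) (G : SimpleGraph (Fin k)) [DecidableRel G.Adj]
    (S : Finset ℕ) (hS : ∀ p ∈ S, p.Prime) :
    Tendsto (fun n : ℕ => ((((Fintype.piFinset fun _ : Fin k => Icc 1 n).filter
        (fun x => ∀ p ∈ S, ∀ i j, G.Adj i j → ¬(p ∣ x i ∧ p ∣ x j))).card : ℝ) / (n:ℝ)^k))
      atTop (nhds (∏ p ∈ S, QG G (1/(p:ℝ)))) := by
  classical
  set M := ∏ p ∈ S, p with hMdef
  have hM : 0 < M := prod_pos fun p hp => (hS p hp).pos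
  have hMr : (0:ℝ) < M := by exact_mod_cast hM
  set R := (Fintype.piFinset fun _ : Fin k => range M).filter
      (fun r => ∀ p ∈ S, ∀ i j, G.Adj i j → ¬(p ∣ r i ∧ p ∣ r j)) with hRdef
  rw [prod_QG k G S hS]
  -- limit of t n = (n/M : ℕ)/n
  have hmod : Tendsto (fun n : ℕ => ((n % M : ℕ):ℝ)/n) atTop (nhds 0) := by
    apply squeeze_zero (fun n => by positivity) (g := fun n : ℕ => (M:ℝ)/n)
    · intro n
      rcases Nat.eq_zero_or_pos n with rfl | hn
      · simp
      · have hnr : (0:ℝ) < n := by exact_mod_cast hn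
        exact (div_le_div_iff_of_pos_right hnr).mpr (by exact_mod_cast (Nat.mod_lt _ hM).le)
    · exact tendsto_const_div_atTop_nhds_zero_nat (M:ℝ)
  have ht : Tendsto (fun n : ℕ => ((n / M : ℕ) : ℝ) / n) atTop (nhds (1/(M:ℝ))) := by
    have base : Tendsto (fun n : ℕ => (1 - ((n % M : ℕ):ℝ)/n) * (1/(M:ℝ)))
        atTop (nhds (1/(M:ℝ))) := by
      have := ((tendsto_const_nhds (x := (1:ℝ)) (f := atTop)).sub hmod).mul
        (tendsto_const_nhds (x := (1/(M:ℝ))))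
      simpa using this
    apply base.congr'
    filter_upwards [eventually_ge_atTop 1] with n hn
    have hnr : (n:ℝ) ≠ 0 := by
      have : (0:ℝ) < n := by exact_mod_cast hn
      exact this.ne'
    have hdm : M * (n / M) + n % M = n := Nat.div_add_mod n M
    have hcast : (M:ℝ) * ((n / M : ℕ):ℝ) + ((n % M : ℕ):ℝ) = (n:ℝ) := by exact_mod_cast hdm
    field_simp
    nlinarith [hcast]
  -- nat bounds
  have hru : ∀ r : Fin k → ℕ, r ∈ R → ∀ i, r i < M := by
    intro r hr i
    rw [hRdef, Finset.mem_filter, Fintype.mem_piFinset] at hr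
    exact mem_range.mp (hr.1 i)
  have low : ∀ n : ℕ, R.card * (n / M)^k ≤
      ((Fintype.piFinset fun _ : Fin k => Icc 1 n).filter
        (fun x => ∀ p ∈ S, ∀ i j, G.Adj i j → ¬(p ∣ x i ∧ p ∣ x j))).card := by
    intro n
    rw [count_decompose k G S hS n, ← hMdef, ← hRdef]
    calc R.card * (n / M)^k = ∑ _r ∈ R, (n / M)^k := by rw [Finset.sum_const, smul_eq_mul]
    _ ≤ ∑ r ∈ R, ∏ i : Fin k, ((Icc 1 n).filter (fun x => x % M = r i)).card := by
        refine Finset.sum_le_sum fun r hr => ?_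
        calc (n / M)^k = ∏ _i : Fin k, (n / M) := by
              rw [Finset.prod_const, card_univ, Fintype.card_fin]
        _ ≤ _ := Finset.prod_le_prod' fun i _ =>
              count_res_lower n M (r i) hM (hru r hr i)
  have high : ∀ n : ℕ,
      (((Fintype.piFinset fun _ : Fin k => Icc 1 n).filter
        (fun x => ∀ p ∈ S, ∀ i j, G.Adj i j → ¬(p ∣ x i ∧ p ∣ x j))).card)
      ≤ R.card * (n / M + 1)^k := by
    intro n
    rw [count_decompose k G S hS n, ← hMdef, ← hRdef]
    calc ∑ r ∈ R, ∏ i : Fin k, ((Icc 1 n).filter (fun x => x % M = r i)).card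
        ≤ ∑ _r ∈ R, (n / M + 1)^k := by
          refine Finset.sum_le_sum fun r hr => ?_
          calc ∏ i : Fin k, ((Icc 1 n).filter (fun x => x % M = r i)).card
              ≤ ∏ _i : Fin k, (n / M + 1) :=
                Finset.prod_le_prod' fun i _ => count_res_upper n M (r i) hM
          _ = (n / M + 1)^k := by rw [Finset.prod_const, card_univ, Fintype.card_fin]
    _ = R.card * (n / M + 1)^k := by rw [Finset.sum_const, smul_eq_mul]
  -- real squeeze
  show Tendsto _ atTop (nhds ((R.card:ℝ)/(M:ℝ)^k))
  have hlim_eq : (R.card : ℝ) / (M:ℝ)^k = (R.card : ℝ) * (1/(M:ℝ))^k := by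
    rw [one_div, inv_pow, div_eq_mul_inv]
  rw [hlim_eq]
  apply tendsto_of_tendsto_of_tendsto_of_le_of_le'
    (g := fun n : ℕ => (R.card:ℝ) * (((n/M:ℕ):ℝ)/n)^k)
    (h := fun n : ℕ => (R.card:ℝ) * ((((n/M:ℕ):ℝ) + 1)/n)^k)
  · exact (ht.pow k).const_mul _
  · have h2 : Tendsto (fun n : ℕ => (((n/M:ℕ):ℝ) + 1)/n) atTop (nhds (1/(M:ℝ))) := by
      have := ht.add tendsto_one_div_atTop_nhds_zero_nat
      rw [add_zero] at this
      apply this.congr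
      intro n
      rw [← add_div]
    exact (h2.pow k).const_mul _
  · filter_upwards [eventually_ge_atTop 1] with n hn
    have hnr : (0:ℝ) < (n:ℝ)^k := by
      have : (0:ℝ) < n := by exact_mod_cast hn
      positivity
    rw [div_pow, mul_div_assoc']
    rw [div_le_div_iff_of_pos_right hnr]
    calc (R.card:ℝ) * ((n/M : ℕ):ℝ)^k = ((R.card * (n/M)^k : ℕ) : ℝ) := by push_cast; ring
    _ ≤ _ := by exact_mod_cast low n
  · filter_upwards [eventually_ge_atTop 1] with n hn
    have hnr : (0:ℝ) < (n:ℝ)^k := by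
      have : (0:ℝ) < n := by exact_mod_cast hn
      positivity
    rw [div_pow, mul_div_assoc']
    rw [div_le_div_iff_of_pos_right hnr]
    calc (((Fintype.piFinset fun _ : Fin k => Icc 1 n).filter
        (fun x => ∀ p ∈ S, ∀ i j, G.Adj i j → ¬(p ∣ x i ∧ p ∣ x j))).card : ℝ)
        ≤ ((R.card * (n / M + 1)^k : ℕ) : ℝ) := by exact_mod_cast high n
    _ = (R.card:ℝ) * (((n/M : ℕ):ℝ) + 1)^k := by push_cast; ring

open Filter in
lemma gap_bound (k : ℕ) (G : SimpleGraph (Fin k)) [DecidableRel G.Adj]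
    (P n : ℕ) (hP : 1 ≤ P) (hn : 1 ≤ n) :
    ((((Fintype.piFinset fun _ : Fin k => Icc 1 n).filter
        (fun x => ∀ p ∈ (range P).filter Nat.Prime, ∀ i j, G.Adj i j → ¬(p ∣ x i ∧ p ∣ x j))).card : ℝ))
      ≤ (((Fintype.piFinset fun _ : Fin k => Icc 1 n).filter
        (fun x => ∀ i j : Fin k, G.Adj i j → Nat.gcd (x i) (x j) = 1)).card : ℝ)
        + (k*k : ℝ) * (n:ℝ)^k * ∑ p ∈ Icc P n, 1/(p:ℝ)^2 := by
  classical
  set pif := (Fintype.piFinset fun _ : Fin k => Icc 1 n) with hpif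
  set bad := (Icc P n).biUnion (fun p =>
    ((univ : Finset (Fin k × Fin k)).filter (fun e => G.Adj e.1 e.2)).biUnion
      (fun e => pif.filter (fun x => p ∣ x e.1 ∧ p ∣ x e.2))) with hbad
  have hsubset : pif.filter
      (fun x => ∀ p ∈ (range P).filter Nat.Prime, ∀ i j, G.Adj i j → ¬(p ∣ x i ∧ p ∣ x j))
      ⊆ (pif.filter (fun x => ∀ i j : Fin k, G.Adj i j → Nat.gcd (x i) (x j) = 1)) ∪ bad := by
    intro x hx
    rw [Finset.mem_filter] at hx
    by_cases hC : ∀ i j : Fin k, G.Adj i j → Nat.gcd (x i) (x j) = 1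
    · exact Finset.mem_union_left _ (Finset.mem_filter.mpr ⟨hx.1, hC⟩)
    · push_neg at hC
      obtain ⟨i, j, hadj, hg⟩ := hC
      obtain ⟨q, hq, hqd⟩ := Nat.exists_prime_and_dvd hg
      have hqi : q ∣ x i := hqd.trans (Nat.gcd_dvd_left _ _)
      have hqj : q ∣ x j := hqd.trans (Nat.gcd_dvd_right _ _)
      have hxi : x i ∈ Icc 1 n := by
        have := Fintype.mem_piFinset.mp hx.1 i
        exact this
      rw [Finset.mem_Icc] at hxi
      have hqP : P ≤ q := by
        by_contra hlt
        push_neg at hlt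
        exact hx.2 q (Finset.mem_filter.mpr ⟨mem_range.mpr hlt, hq⟩) i j hadj ⟨hqi, hqj⟩
      have hqn : q ≤ n := le_trans (Nat.le_of_dvd (by omega) hqi) hxi.2
      refine Finset.mem_union_right _ ?_
      rw [hbad, Finset.mem_biUnion]
      refine ⟨q, Finset.mem_Icc.mpr ⟨hqP, hqn⟩, ?_⟩
      rw [Finset.mem_biUnion]
      exact ⟨(i, j), Finset.mem_filter.mpr ⟨mem_univ _, hadj⟩,
        Finset.mem_filter.mpr ⟨hx.1, hqi, hqj⟩⟩
  have hcard1 : (pif.filter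
      (fun x => ∀ p ∈ (range P).filter Nat.Prime, ∀ i j, G.Adj i j → ¬(p ∣ x i ∧ p ∣ x j))).card
      ≤ (pif.filter (fun x => ∀ i j : Fin k, G.Adj i j → Nat.gcd (x i) (x j) = 1)).card
        + bad.card :=
    le_trans (Finset.card_le_card hsubset) (Finset.card_union_le _ _)
  -- bound each D
  have hD : ∀ p ∈ Icc P n, ∀ e ∈ (univ : Finset (Fin k × Fin k)).filter (fun e => G.Adj e.1 e.2),
      ((pif.filter (fun x => p ∣ x e.1 ∧ p ∣ x e.2)).card : ℝ) ≤ (n:ℝ)^k / (p:ℝ)^2 := by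
    intro p hp e he
    rw [Finset.mem_Icc] at hp
    have hp1 : 1 ≤ p := le_trans hP hp.1
    have hpr : (0:ℝ) < p := by exact_mod_cast hp1
    have hne : e.1 ≠ e.2 := G.ne_of_adj (Finset.mem_filter.mp he).2
    have hk2 : 2 ≤ k := by
      by_contra hlt
      push_neg at hlt
      have hk1 : k ≤ 1 := Nat.lt_succ_iff.mp hlt
      have hi : (e.1 : ℕ) = 0 := Nat.lt_one_iff.mp (lt_of_lt_of_le e.1.isLt hk1)
      have hj : (e.2 : ℕ) = 0 := Nat.lt_one_iff.mp (lt_of_lt_of_le e.2.isLt hk1)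
      exact hne (Fin.val_injective (hi.trans hj.symm))
    have heq : pif.filter (fun x => p ∣ x e.1 ∧ p ∣ x e.2)
        = Fintype.piFinset (fun l : Fin k =>
            if l = e.1 ∨ l = e.2 then (Icc 1 n).filter (fun y => p ∣ y) else Icc 1 n) := by
      ext x
      simp only [Finset.mem_filter, Fintype.mem_piFinset, hpif]
      constructor
      · rintro ⟨hmem, h1, h2⟩ l
        by_cases hl : l = e.1 ∨ l = e.2
        · rw [if_pos hl, Finset.mem_filter]
          refine ⟨hmem l, ?_⟩
          rcases hl with h | h <;> rw [h] <;> assumption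
        · rw [if_neg hl]; exact hmem l
      · intro h
        refine ⟨fun l => ?_, ?_, ?_⟩
        · have := h l
          split at this
          · exact (Finset.mem_filter.mp this).1
          · exact this
        · have := h e.1
          rw [if_pos (Or.inl rfl), Finset.mem_filter] at this
          exact this.2
        · have := h e.2
          rw [if_pos (Or.inr rfl), Finset.mem_filter] at this
          exact this.2
    rw [heq, Fintype.card_piFinset]
    have hfc : ∀ l : Fin k,
        ((if l = e.1 ∨ l = e.2 then (Icc 1 n).filter (fun y => p ∣ y) else Icc 1 n).card)
        = if l = e.1 ∨ l = e.2 then n / p else n := by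
      intro l
      split
      · rw [show Icc 1 n = Ioc 0 n by ext x; simp only [Finset.mem_Icc, Finset.mem_Ioc]; omega, Nat.Ioc_filter_dvd_card_eq_div]
      · rw [Nat.card_Icc, Nat.add_sub_cancel]
    rw [Finset.prod_congr rfl fun l _ => hfc l]
    rw [Finset.prod_ite (fun _ => n / p) (fun _ => n), Finset.prod_const, Finset.prod_const]
    have hset : univ.filter (fun l : Fin k => l = e.1 ∨ l = e.2) = {e.1, e.2} := by
      ext l; simp [Finset.mem_insert]
    have hcard2 : (univ.filter (fun l : Fin k => l = e.1 ∨ l = e.2)).card = 2 := by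
      rw [hset, Finset.card_insert_of_notMem (by simpa using hne), Finset.card_singleton]
    have hcardc : (univ.filter (fun l : Fin k => ¬(l = e.1 ∨ l = e.2))).card = k - 2 := by
      have h1 : univ.filter (fun l : Fin k => ¬(l = e.1 ∨ l = e.2)) = {e.1, e.2}ᶜ := by
        ext l; simp
      rw [h1, Finset.card_compl, Fintype.card_fin,
        Finset.card_insert_of_notMem (by simpa using hne), Finset.card_singleton]
    rw [hcard2, hcardc]
    push_cast
    have h1 : ((n / p : ℕ) : ℝ) ≤ (n:ℝ)/p := Nat.cast_div_le
    have h2 : ((n:ℝ)/p)^2 * (n:ℝ)^(k-2) = (n:ℝ)^k / (p:ℝ)^2 := by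
      rw [div_pow]
      rw [div_mul_eq_mul_div, mul_comm ((n:ℝ)^2), pow_sub_mul_pow (n:ℝ) hk2]
    calc ((n / p : ℕ) : ℝ)^2 * (n:ℝ)^(k-2) ≤ ((n:ℝ)/p)^2 * (n:ℝ)^(k-2) := by
          have : (0:ℝ) ≤ (n:ℝ)^(k-2) := by positivity
          have h3 : ((n / p : ℕ) : ℝ)^2 ≤ ((n:ℝ)/p)^2 := by
            apply pow_le_pow_left₀ (by positivity) h1
          nlinarith
    _ = (n:ℝ)^k / (p:ℝ)^2 := h2
  -- combine
  have hbadcard : (bad.card : ℝ) ≤ (k*k : ℝ) * (n:ℝ)^k * ∑ p ∈ Icc P n, 1/(p:ℝ)^2 := by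
    have h1 : bad.card ≤ ∑ p ∈ Icc P n,
        ∑ e ∈ (univ : Finset (Fin k × Fin k)).filter (fun e => G.Adj e.1 e.2),
          (pif.filter (fun x => p ∣ x e.1 ∧ p ∣ x e.2)).card := by
      refine le_trans (Finset.card_biUnion_le) (Finset.sum_le_sum fun p hp => ?_)
      exact Finset.card_biUnion_le
    calc (bad.card : ℝ) ≤ ∑ p ∈ Icc P n,
        ∑ e ∈ (univ : Finset (Fin k × Fin k)).filter (fun e => G.Adj e.1 e.2),
          ((pif.filter (fun x => p ∣ x e.1 ∧ p ∣ x e.2)).card : ℝ) := by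
            exact_mod_cast h1
    _ ≤ ∑ p ∈ Icc P n, ∑ _e ∈ (univ : Finset (Fin k × Fin k)).filter (fun e => G.Adj e.1 e.2),
          (n:ℝ)^k / (p:ℝ)^2 :=
        Finset.sum_le_sum fun p hp => Finset.sum_le_sum fun e he => hD p hp e he
    _ ≤ ∑ p ∈ Icc P n, (k*k : ℝ) * ((n:ℝ)^k / (p:ℝ)^2) := by
        refine Finset.sum_le_sum fun p hp => ?_
        rw [Finset.sum_const, nsmul_eq_mul]
        have hc : (((univ : Finset (Fin k × Fin k)).filter (fun e => G.Adj e.1 e.2)).card : ℝ)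
            ≤ (k*k : ℝ) := by
          have := Finset.card_filter_le (univ : Finset (Fin k × Fin k)) (fun e => G.Adj e.1 e.2)
          have h2 : (univ : Finset (Fin k × Fin k)).card = k * k := by
            rw [Finset.card_univ, Fintype.card_prod, Fintype.card_fin]
          exact_mod_cast le_trans this (le_of_eq h2)
        have hnn : (0:ℝ) ≤ (n:ℝ)^k / (p:ℝ)^2 := by positivity
        nlinarith
    _ = (k*k : ℝ) * (n:ℝ)^k * ∑ p ∈ Icc P n, 1/(p:ℝ)^2 := by
        rw [Finset.mul_sum]
        exact Finset.sum_congr rfl fun p hp => by ring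
  calc ((pif.filter
      (fun x => ∀ p ∈ (range P).filter Nat.Prime, ∀ i j, G.Adj i j → ¬(p ∣ x i ∧ p ∣ x j))).card : ℝ)
      ≤ ((pif.filter (fun x => ∀ i j : Fin k, G.Adj i j → Nat.gcd (x i) (x j) = 1)).card : ℝ)
        + (bad.card : ℝ) := by exact_mod_cast hcard1
  _ ≤ _ := by
      have := hbadcard
      linarith

lemma QG_nonneg (k : ℕ) (G : SimpleGraph (Fin k)) [DecidableRel G.Adj]
    (q : ℕ) (hq : q.Prime) : 0 ≤ QG G (1 / (q:ℝ)) := by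
  rw [QG_prime' k G q hq]
  positivity

lemma QG_le_one (k : ℕ) (G : SimpleGraph (Fin k)) [DecidableRel G.Adj]
    (q : ℕ) (hq : q.Prime) : QG G (1 / (q:ℝ)) ≤ 1 := by
  rw [QG_prime' k G q hq]
  have hq0 : (0:ℝ) < (q:ℝ)^k := by
    have : (0:ℝ) < q := by exact_mod_cast hq.pos
    positivity
  rw [div_le_one hq0]
  have h1 : ((Fintype.piFinset fun _ : Fin k => range q).filter
      (fun r => ∀ i j, G.Adj i j → ¬(q ∣ r i ∧ q ∣ r j))).card
      ≤ (Fintype.piFinset fun _ : Fin k => range q).card := Finset.card_filter_le _ _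
  have h2 : (Fintype.piFinset fun _ : Fin k => range q).card = q^k := by
    rw [Fintype.card_piFinset]
    simp [Finset.prod_const, card_univ]
  exact_mod_cast h2 ▸ h1

noncomputable def tailSum (P : ℕ) : ℝ := ∑' j : ℕ, 1/(((j + P : ℕ)):ℝ)^2

open Filter in
lemma tail_tendsto : Tendsto tailSum atTop (nhds 0) :=
  tendsto_sum_nat_add (fun m : ℕ => 1/(m:ℝ)^2)

lemma tail_nonneg (P : ℕ) : 0 ≤ tailSum P :=
  tsum_nonneg fun j => by positivity

lemma sum_Icc_le_tail (P n : ℕ) : ∑ p ∈ Icc P n, 1/(p:ℝ)^2 ≤ tailSum P := by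
  rcases le_or_gt P n with h | h
  · have hmap : Icc P n = Finset.map (addLeftEmbedding P) (Icc 0 (n - P)) := by
      have h2 : P + (n - P) = n := by omega
      rw [Finset.map_add_left_Icc, add_zero, h2]
    rw [hmap, Finset.sum_map]
    have hsummable : Summable (fun j : ℕ => 1/(((j + P:ℕ)):ℝ)^2) := by
      have h0 : Summable (fun m : ℕ => 1/(m:ℝ)^2) := Real.summable_one_div_nat_pow.mpr one_lt_two
      exact (summable_nat_add_iff (f := fun m : ℕ => 1/(m:ℝ)^2) P).mpr h0
    have := Summable.sum_le_tsum (Icc 0 (n - P)) (fun j _ => by positivity) hsummable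
    refine le_trans (le_of_eq ?_) this
    refine Finset.sum_congr rfl fun j _ => ?_
    simp [addLeftEmbedding_apply, add_comm]
  · rw [Finset.Icc_eq_empty_of_lt h, Finset.sum_empty]
    exact tail_nonneg P

/-- If `X_1, …, X_k` are independent uniform variables on `[n]` and `G` is a graph on
`{1, …, k}`, then `P(gcd(X_i, X_j) = 1 for all edges (i,j) of G)` converges, as
`n → ∞`, to the Euler product `∏_{p prime} Q_G(1/p)`. -/
theorem coprime_along_edges_tendsto (k : ℕ) (G : SimpleGraph (Fin k))
    [DecidableRel G.Adj] :
    ∃ L : ℝ,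
      Tendsto (fun N : ℕ =>
          ∏ p ∈ (Finset.range N).filter Nat.Prime, QG G (1 / (p : ℝ)))
        atTop (nhds L) ∧
      Tendsto (fun n : ℕ =>
          (((Fintype.piFinset fun _ : Fin k => Finset.Icc 1 n).filter
              (fun x => ∀ i j : Fin k, G.Adj i j → Nat.gcd (x i) (x j) = 1)).card : ℝ)
            / (n : ℝ) ^ k)
        atTop (nhds L) := by
  classical
  have hprime : ∀ N : ℕ, ∀ p ∈ (Finset.range N).filter Nat.Prime, p.Prime :=
    fun N p hp => (Finset.mem_filter.mp hp).2
  set Pfun : ℕ → ℝ := fun N => ∏ p ∈ (Finset.range N).filter Nat.Prime, QG G (1 / (p : ℝ))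
    with hPfun
  have hanti : Antitone Pfun := by
    intro N N' h
    have hsub : (range N).filter Nat.Prime ⊆ (range N').filter Nat.Prime :=
      Finset.filter_subset_filter _ (Finset.range_subset_range.mpr h)
    rw [hPfun]
    dsimp only
    rw [← Finset.prod_sdiff hsub]
    have h1 : ∏ p ∈ (range N').filter Nat.Prime \ (range N).filter Nat.Prime,
        QG G (1/(p:ℝ)) ≤ 1 :=
      Finset.prod_le_one
        (fun p hp => QG_nonneg k G p (hprime N' p (Finset.mem_sdiff.mp hp).1))
        (fun p hp => QG_le_one k G p (hprime N' p (Finset.mem_sdiff.mp hp).1))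
    have h2 : 0 ≤ ∏ p ∈ (range N).filter Nat.Prime, QG G (1/(p:ℝ)) :=
      Finset.prod_nonneg fun p hp => QG_nonneg k G p (hprime N p hp)
    calc (∏ p ∈ (range N').filter Nat.Prime \ (range N).filter Nat.Prime, QG G (1/(p:ℝ)))
          * ∏ p ∈ (range N).filter Nat.Prime, QG G (1/(p:ℝ))
        ≤ 1 * ∏ p ∈ (range N).filter Nat.Prime, QG G (1/(p:ℝ)) :=
          mul_le_mul_of_nonneg_right h1 h2
    _ = ∏ p ∈ (range N).filter Nat.Prime, QG G (1/(p:ℝ)) := one_mul _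
  have hbdd : BddBelow (Set.range Pfun) := by
    refine ⟨0, ?_⟩
    rintro x ⟨N, rfl⟩
    exact Finset.prod_nonneg fun p hp => QG_nonneg k G p (hprime N p hp)
  have hL : Tendsto Pfun atTop (nhds (⨅ N, Pfun N)) := tendsto_atTop_ciInf hanti hbdd
  refine ⟨⨅ N, Pfun N, hL, ?_⟩
  set L := ⨅ N, Pfun N with hLdef
  set f : ℕ → ℝ := fun n => (((Fintype.piFinset fun _ : Fin k => Finset.Icc 1 n).filter
      (fun x => ∀ i j : Fin k, G.Adj i j → Nat.gcd (x i) (x j) = 1)).card : ℝ) / (n:ℝ)^k with hf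
  set g : ℕ → ℕ → ℝ := fun P n => ((((Fintype.piFinset fun _ : Fin k => Icc 1 n).filter
      (fun x => ∀ p ∈ (range P).filter Nat.Prime, ∀ i j,
        G.Adj i j → ¬(p ∣ x i ∧ p ∣ x j))).card : ℝ)) / (n:ℝ)^k with hg
  have hfg : ∀ P n : ℕ, f n ≤ g P n := by
    intro P n
    have hsub : (Fintype.piFinset fun _ : Fin k => Finset.Icc 1 n).filter
        (fun x => ∀ i j : Fin k, G.Adj i j → Nat.gcd (x i) (x j) = 1)
        ⊆ (Fintype.piFinset fun _ : Fin k => Icc 1 n).filter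
        (fun x => ∀ p ∈ (range P).filter Nat.Prime, ∀ i j,
          G.Adj i j → ¬(p ∣ x i ∧ p ∣ x j)) := by
      intro x hx
      rw [Finset.mem_filter] at hx ⊢
      refine ⟨hx.1, fun p hp i j hadj hd => ?_⟩
      have hpp := (Finset.mem_filter.mp hp).2
      have hdg : p ∣ Nat.gcd (x i) (x j) := Nat.dvd_gcd hd.1 hd.2
      rw [hx.2 i j hadj] at hdg
      exact hpp.ne_one (Nat.dvd_one.mp hdg)
    have hcard := Finset.card_le_card hsub
    rw [hf, hg]
    dsimp only
    rw [div_eq_mul_inv, div_eq_mul_inv]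
    exact mul_le_mul_of_nonneg_right (by exact_mod_cast hcard) (by positivity)
  have hgf : ∀ P n : ℕ, 1 ≤ P → 1 ≤ n → g P n ≤ f n + (k*k:ℝ) * tailSum P := by
    intro P n hP hn
    have hb := gap_bound k G P n hP hn
    have hnk : (0:ℝ) < (n:ℝ)^k := by
      have : (0:ℝ) < n := by exact_mod_cast hn
      positivity
    rw [hg, hf]
    dsimp only
    have step1 : ((((Fintype.piFinset fun _ : Fin k => Icc 1 n).filter
        (fun x => ∀ p ∈ (range P).filter Nat.Prime, ∀ i j,
          G.Adj i j → ¬(p ∣ x i ∧ p ∣ x j))).card : ℝ)) / (n:ℝ)^k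
        ≤ ((((Fintype.piFinset fun _ : Fin k => Finset.Icc 1 n).filter
          (fun x => ∀ i j : Fin k, G.Adj i j → Nat.gcd (x i) (x j) = 1)).card : ℝ)
          + (k*k : ℝ) * (n:ℝ)^k * ∑ p ∈ Icc P n, 1/(p:ℝ)^2) / (n:ℝ)^k := by
      rw [div_eq_mul_inv, div_eq_mul_inv]
      exact mul_le_mul_of_nonneg_right hb (by positivity)
    refine le_trans step1 ?_
    rw [add_div]
    have step2 : (k*k : ℝ) * (n:ℝ)^k * (∑ p ∈ Icc P n, 1/(p:ℝ)^2) / (n:ℝ)^k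
        = (k*k : ℝ) * ∑ p ∈ Icc P n, 1/(p:ℝ)^2 := by
      field_simp
    rw [step2]
    have step3 : (k*k : ℝ) * (∑ p ∈ Icc P n, 1/(p:ℝ)^2) ≤ (k*k:ℝ) * tailSum P :=
      mul_le_mul_of_nonneg_left (sum_Icc_le_tail P n) (by positivity)
    linarith
  have hgP : ∀ P : ℕ, Tendsto (g P) atTop (nhds (Pfun P)) := fun P =>
    countS_tendsto k G ((Finset.range P).filter Nat.Prime) (hprime P)
  rw [Metric.tendsto_atTop]
  intro ε hε
  have e1 : ∀ᶠ P in atTop, (k*k:ℝ)*tailSum P < ε/3 := by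
    have h0 : Tendsto (fun P => (k*k:ℝ)*tailSum P) atTop (nhds 0) := by
      simpa using tail_tendsto.const_mul ((k*k : ℕ):ℝ)
    exact h0.eventually_lt_const (by positivity)
  have e2 : ∀ᶠ P in atTop, dist (Pfun P) L < ε/3 := by
    obtain ⟨N0, hN0⟩ := Metric.tendsto_atTop.mp hL (ε/3) (by positivity)
    exact eventually_atTop.mpr ⟨N0, hN0⟩
  obtain ⟨P, hP1, hP2, hP3⟩ : ∃ P : ℕ, 1 ≤ P ∧ (k*k:ℝ)*tailSum P < ε/3 ∧
      dist (Pfun P) L < ε/3 := by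
    rcases ((eventually_ge_atTop 1).and (e1.and e2)).exists with ⟨P, h1, h2, h3⟩
    exact ⟨P, h1, h2, h3⟩
  obtain ⟨N, hN⟩ := Metric.tendsto_atTop.mp (hgP P) (ε/3) (by positivity)
  refine ⟨max N 1, fun n hn => ?_⟩
  have hn1 : 1 ≤ n := le_trans (le_max_right N 1) hn
  have hnN : N ≤ n := le_trans (le_max_left N 1) hn
  have d1 : |f n - g P n| ≤ (k*k:ℝ) * tailSum P := by
    rw [abs_le]
    have h1 := hgf P n hP1 hn1
    have h2 := hfg P n
    have hnn : 0 ≤ (k*k:ℝ)*tailSum P := mul_nonneg (by positivity) (tail_nonneg P)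
    constructor <;> linarith
  have tri := dist_triangle4 (f n) (g P n) (Pfun P) L
  have d2 : dist (g P n) (Pfun P) < ε/3 := hN n hnN
  have d1' : dist (f n) (g P n) < ε/3 := lt_of_le_of_lt (by rw [Real.dist_eq]; exact d1) hP2
  calc dist (f n) L ≤ dist (f n) (g P n) + dist (g P n) (Pfun P) + dist (Pfun P) L := tri
  _ < ε/3 + ε/3 + ε/3 := by linarith
  _ = ε := by ring
end

section
/- For three independent uniform random integers X_1, X_2, X_3 on [n], P(gcd(X_1,X_2) = 1 and gcd(X_2,X_3) = 1) → ∏_{p prime} (1 − 1/p)·(1 + 1/p − 1/p²) as n → ∞. -/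
open Filter Finset ArithmeticFunction
open scoped ArithmeticFunction.Moebius ArithmeticFunction.zeta

noncomputable section

namespace PathThree

/-- `μ(n)/n` as an arithmetic function. -/
def ubar : ArithmeticFunction ℝ := ⟨fun n => (μ n : ℝ) / n, by simp⟩

lemma ubar_apply (n : ℕ) : ubar n = (μ n : ℝ) / n := rfl

lemma ubar_mult : ubar.IsMultiplicative := by
  constructor
  · simp [ubar_apply]
  · intro m n h
    simp only [ubar_apply, isMultiplicative_moebius.map_mul_of_coprime h]
    push_cast
    rw [div_mul_div_comm]

/-- `U n = ∑_{d ∣ n} μ(d)/d`. -/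
def Uf : ArithmeticFunction ℝ := ↑ζ * ubar

lemma Uf_mult : Uf.IsMultiplicative := isMultiplicative_zeta.natCast.mul ubar_mult

lemma Uf_apply {n : ℕ} : Uf n = ∑ d ∈ n.divisors, (μ d : ℝ) / d := by
  rw [Uf, coe_zeta_mul_apply]
  simp only [ubar_apply]

lemma Uf_prime_pow {p : ℕ} (hp : p.Prime) {e : ℕ} (he : e ≠ 0) :
    Uf (p ^ e) = 1 - 1 / p := by
  rw [Uf_apply, Nat.sum_divisors_prime_pow hp]
  have key : ∀ i ∈ Finset.range (e + 1),
      (μ (p ^ i) : ℝ) / (p ^ i : ℕ) =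
        (if 0 = i then (1 : ℝ) else 0) + (if 1 = i then (-1 : ℝ) / p else 0) := by
    intro i _
    match i with
    | 0 => simp
    | 1 => simp [moebius_apply_prime hp]
    | (k + 2) =>
      rw [moebius_apply_prime_pow hp (by omega)]
      simp
  rw [Finset.sum_congr rfl key, Finset.sum_add_distrib, Finset.sum_ite_eq, Finset.sum_ite_eq]
  have h0 : (0 : ℕ) ∈ Finset.range (e + 1) := by simp
  have h1 : (1 : ℕ) ∈ Finset.range (e + 1) := by simp [Nat.pos_of_ne_zero he]
  rw [if_pos h0, if_pos h1]
  ring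

/-- `Fa = μ ⋆ (U·U)` (Dirichlet convolution). -/
def Fa : ArithmeticFunction ℝ := ↑μ * (Uf.pmul Uf)

lemma Fa_mult : Fa.IsMultiplicative :=
  isMultiplicative_moebius.intCast.mul (Uf_mult.pmul Uf_mult)

lemma Fa_apply {n : ℕ} :
    Fa n = ∑ x ∈ n.divisorsAntidiagonal, (μ x.1 : ℝ) * Uf x.2 ^ 2 := by
  simp [Fa, mul_apply, pmul_apply, sq]

lemma Fa_prime_pow {p : ℕ} (hp : p.Prime) {e : ℕ} (he : e ≠ 0) :
    Fa (p ^ e) = Uf (p ^ e) ^ 2 - Uf (p ^ (e - 1)) ^ 2 := by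
  rw [Fa_apply, Nat.sum_divisorsAntidiagonal (f := fun a b => (μ a : ℝ) * Uf b ^ 2),
    Nat.sum_divisors_prime_pow hp]
  have key : ∀ i ∈ Finset.range (e + 1),
      (μ (p ^ i) : ℝ) * Uf (p ^ e / p ^ i) ^ 2 =
        (if 0 = i then (Uf (p ^ e) ^ 2 : ℝ) else 0)
          + (if 1 = i then (-(Uf (p ^ (e - 1)) ^ 2) : ℝ) else 0) := by
    intro i hi
    have hle : i ≤ e := by simpa using Nat.lt_succ_iff.mp (Finset.mem_range.mp hi)
    have hdiv : p ^ e / p ^ i = p ^ (e - i) := Nat.pow_div hle hp.pos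
    match i with
    | 0 => simp [hdiv]
    | 1 => rw [pow_one] at hdiv; simp [hdiv, moebius_apply_prime hp]
    | (k + 2) =>
      rw [moebius_apply_prime_pow hp (by omega)]
      simp
  rw [Finset.sum_congr rfl key, Finset.sum_add_distrib, Finset.sum_ite_eq, Finset.sum_ite_eq]
  have h0 : (0 : ℕ) ∈ Finset.range (e + 1) := by simp
  have h1 : (1 : ℕ) ∈ Finset.range (e + 1) := by simp [Nat.pos_of_ne_zero he]
  rw [if_pos h0, if_pos h1]
  ring

lemma Fa_prime {p : ℕ} (hp : p.Prime) : Fa p = (1 - 1 / p) ^ 2 - 1 := by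
  have h1 := Fa_prime_pow hp (e := 1) one_ne_zero
  rw [pow_one] at h1
  rw [h1, show Uf p = 1 - 1 / p by
    have := Uf_prime_pow hp (e := 1) one_ne_zero; rwa [pow_one] at this]
  norm_num [Uf_mult.map_one]

lemma Fa_prime_pow_eq_zero {p : ℕ} (hp : p.Prime) {e : ℕ} (he : 2 ≤ e) :
    Fa (p ^ e) = 0 := by
  rw [Fa_prime_pow hp (by omega), Uf_prime_pow hp (by omega), Uf_prime_pow hp (by omega)]
  ring

/-- The multiplicative function whose Dirichlet series gives the limit. -/
def f : ℕ → ℝ := fun n => Fa n / n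

lemma f_zero : f 0 = 0 := by simp [f]

lemma f_one : f 1 = 1 := by simp [f, Fa_mult.map_one]

lemma f_mul {m n : ℕ} (h : Nat.Coprime m n) : f (m * n) = f m * f n := by
  simp only [f, Fa_mult.map_mul_of_coprime h, Nat.cast_mul]
  rw [div_mul_div_comm]

/-- The dominating function. -/
def bnd : ℕ × ℕ → ℝ := fun x =>
  (x.1 : ℝ) ^ (-(3 / 2 : ℝ)) * (x.2 : ℝ) ^ (-(3 / 2 : ℝ))

lemma bnd_nonneg (x : ℕ × ℕ) : 0 ≤ bnd x :=
  mul_nonneg (Real.rpow_nonneg (Nat.cast_nonneg _) _) (Real.rpow_nonneg (Nat.cast_nonneg _) _)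

lemma bnd_summable : Summable bnd := by
  have h : Summable (fun n : ℕ => (n : ℝ) ^ (-(3 / 2 : ℝ))) :=
    Real.summable_nat_rpow.mpr (by norm_num)
  exact h.mul_of_nonneg h (fun n => Real.rpow_nonneg (Nat.cast_nonneg _) _)
    (fun n => Real.rpow_nonneg (Nat.cast_nonneg _) _)

/-- For `d, e ≥ 1`, `1/(d·e·lcm d e) ≤ bnd (d,e)`. -/
lemma one_div_le_bnd {d e : ℕ} (hd : 0 < d) (he : 0 < e) :
    1 / ((d : ℝ) * e * (Nat.lcm d e : ℝ)) ≤ bnd (d, e) := by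
  set L := Nat.lcm d e with hL
  have hL0 : 0 < L := Nat.pos_of_ne_zero (Nat.lcm_ne_zero hd.ne' he.ne')
  set D : ℝ := (d : ℝ) * e with hD
  have hD0 : (0 : ℝ) < D := by positivity
  have hsq : D ≤ (L : ℝ) ^ 2 := by
    have h1 : (d : ℝ) ≤ L := Nat.cast_le.mpr (Nat.le_of_dvd hL0 (Nat.dvd_lcm_left _ _))
    have h2 : (e : ℝ) ≤ L := Nat.cast_le.mpr (Nat.le_of_dvd hL0 (Nat.dvd_lcm_right _ _))
    have := mul_le_mul h1 h2 (by positivity) (by positivity)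
    simpa [sq, hD] using this
  have hsqrt : Real.sqrt D ≤ (L : ℝ) := by
    calc Real.sqrt D ≤ Real.sqrt ((L : ℝ) ^ 2) := Real.sqrt_le_sqrt hsq
    _ = L := Real.sqrt_sq (by positivity)
  have h32 : D ^ ((3 : ℝ) / 2) = D * Real.sqrt D := by
    rw [show (3 : ℝ) / 2 = 1 + 1 / 2 by norm_num, Real.rpow_add hD0, Real.rpow_one,
      Real.sqrt_eq_rpow]
  have hbnd : bnd (d, e) = 1 / D ^ ((3 : ℝ) / 2) := by
    rw [bnd, ← Real.mul_rpow (Nat.cast_nonneg _) (Nat.cast_nonneg _), ← hD,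
      Real.rpow_neg hD0.le, one_div]
  rw [hbnd]
  apply one_div_le_one_div_of_le
  · rw [h32]; positivity
  · rw [h32]
    exact mul_le_mul_of_nonneg_left hsqrt hD0.le

/-- The summand over pairs. -/
def g : ℕ × ℕ → ℝ := fun x =>
  (μ x.1 : ℝ) * (μ x.2 : ℝ) / ((x.1 : ℝ) * (x.2 : ℝ) * (Nat.lcm x.1 x.2 : ℝ))

/-- The lcm-convolution of `μ(d)/d` with itself. -/
def Sfun : ℕ → ℝ := fun n =>
  ∑ x ∈ n.divisors ×ˢ n.divisors,
    if Nat.lcm x.1 x.2 = n then (μ x.1 : ℝ) / x.1 * ((μ x.2 : ℝ) / x.2) else 0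

lemma sum_Sfun {n : ℕ} (hn : 0 < n) :
    ∑ m ∈ n.divisors, Sfun m = Uf n ^ 2 := by
  have step1 : ∀ m ∈ n.divisors, Sfun m =
      ∑ x ∈ n.divisors ×ˢ n.divisors,
        if Nat.lcm x.1 x.2 = m then (μ x.1 : ℝ) / x.1 * ((μ x.2 : ℝ) / x.2) else 0 := by
    intro m hm
    have hmn : m ∣ n := Nat.dvd_of_mem_divisors hm
    have hm0 : m ≠ 0 := (Nat.pos_of_mem_divisors hm).ne'
    refine Finset.sum_subset ?_ ?_
    · exact Finset.product_subset_product (Nat.divisors_subset_of_dvd hn.ne' hmn)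
        (Nat.divisors_subset_of_dvd hn.ne' hmn)
    · intro x hx hx'
      rw [if_neg]
      intro hlcm
      apply hx'
      rw [Finset.mem_product] at hx ⊢
      have h1 : x.1 ∣ m := hlcm ▸ Nat.dvd_lcm_left _ _
      have h2 : x.2 ∣ m := hlcm ▸ Nat.dvd_lcm_right _ _
      exact ⟨Nat.mem_divisors.mpr ⟨h1, hm0⟩, Nat.mem_divisors.mpr ⟨h2, hm0⟩⟩
  rw [Finset.sum_congr rfl step1, Finset.sum_comm]
  have step2 : ∀ x ∈ n.divisors ×ˢ n.divisors,
      (∑ m ∈ n.divisors,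
        if Nat.lcm x.1 x.2 = m then (μ x.1 : ℝ) / x.1 * ((μ x.2 : ℝ) / x.2) else 0)
        = (μ x.1 : ℝ) / x.1 * ((μ x.2 : ℝ) / x.2) := by
    intro x hx
    rw [Finset.mem_product] at hx
    rw [Finset.sum_ite_eq]
    rw [if_pos]
    exact Nat.mem_divisors.mpr
      ⟨Nat.lcm_dvd (Nat.dvd_of_mem_divisors hx.1) (Nat.dvd_of_mem_divisors hx.2), hn.ne'⟩
  rw [Finset.sum_congr rfl step2, Uf_apply, sq, Finset.sum_mul_sum, ← Finset.sum_product']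

lemma Sfun_eq_Fa {n : ℕ} (hn : 0 < n) : Sfun n = Fa n := by
  have h := (sum_eq_iff_sum_smul_moebius_eq (f := Sfun) (g := fun n => Uf n ^ 2)).mp
    (fun m hm => sum_Sfun hm) n hn
  rw [← h, Fa_apply]
  refine Finset.sum_congr rfl fun x _ => ?_
  rw [zsmul_eq_mul]

/-- The fiber identity. -/
lemma tsum_fiber_eq_f (k : ℕ) :
    ∑' x : (fun x : ℕ × ℕ => Nat.lcm x.1 x.2) ⁻¹' {k}, g x = f k := by
  rcases Nat.eq_zero_or_pos k with rfl | hk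
  · have : ∀ x : (fun x : ℕ × ℕ => Nat.lcm x.1 x.2) ⁻¹' {(0 : ℕ)}, g x = 0 := by
      rintro ⟨x, hx⟩
      have : Nat.lcm x.1 x.2 = 0 := hx
      simp [g, this]
    rw [tsum_congr this, tsum_zero]
    simp [f]
  · have hset : (fun x : ℕ × ℕ => Nat.lcm x.1 x.2) ⁻¹' {k} =
        ↑((k.divisors ×ˢ k.divisors).filter (fun x => Nat.lcm x.1 x.2 = k)) := by
      ext x
      simp only [Set.mem_preimage, Set.mem_singleton_iff, Finset.coe_filter,
        Set.mem_setOf_eq, Finset.mem_product, Nat.mem_divisors]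
      constructor
      · intro h
        exact ⟨⟨⟨h ▸ Nat.dvd_lcm_left _ _, hk.ne'⟩, ⟨h ▸ Nat.dvd_lcm_right _ _, hk.ne'⟩⟩, h⟩
      · exact fun h => h.2
    rw [hset, Finset.tsum_subtype' ((k.divisors ×ˢ k.divisors).filter
      (fun x => Nat.lcm x.1 x.2 = k)) g, Finset.sum_filter]
    have : ∀ x ∈ k.divisors ×ˢ k.divisors,
        (if Nat.lcm x.1 x.2 = k then g x else 0) =
          (if Nat.lcm x.1 x.2 = k then (μ x.1 : ℝ) / x.1 * ((μ x.2 : ℝ) / x.2) else 0) / k := by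
      intro x _
      split_ifs with h
      · rw [g, h]
        rw [div_mul_div_comm, div_div]
      · simp
    rw [Finset.sum_congr rfl this, ← Finset.sum_div, ← Sfun, Sfun_eq_Fa hk, f]

lemma abs_g_le (x : ℕ × ℕ) : ‖g x‖ ≤ bnd x := by
  obtain ⟨d, e⟩ := x
  rcases Nat.eq_zero_or_pos d with rfl | hd
  · simp [g, bnd]
  rcases Nat.eq_zero_or_pos e with rfl | he
  · simp [g, bnd]
  have hnum : ‖(μ d : ℝ) * (μ e : ℝ)‖ ≤ 1 := by
    rw [norm_mul]
    have h1 : ‖(μ d : ℝ)‖ ≤ 1 := by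
      rw [show ((μ d : ℤ) : ℝ) = ((μ d : ℤ) : ℝ) from rfl, Real.norm_eq_abs, ← Int.cast_abs]
      exact_mod_cast abs_moebius_le_one
    have h2 : ‖(μ e : ℝ)‖ ≤ 1 := by
      rw [Real.norm_eq_abs, ← Int.cast_abs]
      exact_mod_cast abs_moebius_le_one
    calc ‖(μ d : ℝ)‖ * ‖(μ e : ℝ)‖ ≤ 1 * 1 :=
      mul_le_mul h1 h2 (norm_nonneg _) zero_le_one
    _ = 1 := by ring
  have hden : (0 : ℝ) < (d : ℝ) * e * (Nat.lcm d e : ℝ) := by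
    have : 0 < Nat.lcm d e := Nat.pos_of_ne_zero (Nat.lcm_ne_zero hd.ne' he.ne')
    positivity
  calc ‖g (d, e)‖ = ‖(μ d : ℝ) * (μ e : ℝ)‖ / ((d : ℝ) * e * (Nat.lcm d e : ℝ)) := by
        rw [g, norm_div, Real.norm_eq_abs (((d : ℝ)) * e * _), abs_of_pos hden]
    _ ≤ 1 / ((d : ℝ) * e * (Nat.lcm d e : ℝ)) := by
        gcongr
    _ ≤ bnd (d, e) := one_div_le_bnd hd he

lemma g_summable : Summable g := bnd_summable.of_norm_bounded abs_g_le

lemma g_norm_summable : Summable (fun x => ‖g x‖) :=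
  bnd_summable.of_nonneg_of_le (fun x => norm_nonneg _) abs_g_le

lemma f_norm_summable : Summable (fun n => ‖f n‖) := by
  have hfib := g_norm_summable.hasSum.tsum_fiberwise (fun x : ℕ × ℕ => Nat.lcm x.1 x.2)
  refine hfib.summable.of_nonneg_of_le (fun n => norm_nonneg _) (fun n => ?_)
  rw [← tsum_fiber_eq_f n]
  exact norm_tsum_le_tsum_norm (g_norm_summable.subtype _)

lemma tsum_f_eq_tsum_g : ∑' n, f n = ∑' x, g x := by
  have h := g_summable.hasSum.tsum_fiberwise (fun x : ℕ × ℕ => Nat.lcm x.1 x.2)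
  have h2 : HasSum f (∑' x, g x) := by
    have : (fun k : ℕ => ∑' x : (fun x : ℕ × ℕ => Nat.lcm x.1 x.2) ⁻¹' {k}, g x) = f :=
      funext tsum_fiber_eq_f
    rwa [this] at h
  exact h2.tsum_eq

lemma tsum_f_prime_pow {p : ℕ} (hp : p.Prime) :
    ∑' e : ℕ, f (p ^ e) = (1 - 1 / (p : ℝ)) * (1 + 1 / (p : ℝ) - 1 / (p : ℝ) ^ 2) := by
  have hsupp : ∀ e ∉ ({0, 1} : Finset ℕ), f (p ^ e) = 0 := by
    intro e he
    have h2 : 2 ≤ e := by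
      simp only [Finset.mem_insert, Finset.mem_singleton] at he
      omega
    simp [f, Fa_prime_pow_eq_zero hp h2]
  rw [tsum_eq_sum hsupp]
  have hp0 : (p : ℝ) ≠ 0 := Nat.cast_ne_zero.mpr hp.pos.ne'
  rw [Finset.sum_insert (by simp), Finset.sum_singleton, pow_zero, pow_one, f_one,
    show f p = ((1 - 1 / (p : ℝ)) ^ 2 - 1) / p by rw [f, Fa_prime hp]]
  field_simp
  ring

lemma euler_side :
    Tendsto (fun N : ℕ =>
        ∏ p ∈ (Finset.range N).filter Nat.Prime,
          (1 - 1 / (p : ℝ)) * (1 + 1 / (p : ℝ) - 1 / (p : ℝ) ^ 2))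
      atTop (nhds (∑' n, f n)) := by
  have h := EulerProduct.eulerProduct f_one (fun {m n} h => f_mul h) f_norm_summable f_zero
  refine h.congr fun N => ?_
  refine Finset.prod_congr rfl fun p hp => ?_
  exact tsum_f_prime_pow (Nat.prime_of_mem_primesBelow hp)


lemma hdivcount (n d : ℕ) :
    (∑ y ∈ Finset.Icc 1 n, if d ∣ y then (1 : ℝ) else 0) = ((n / d : ℕ) : ℝ) := by
  rw [Finset.sum_boole, show Finset.Icc 1 n = Finset.Ioc 0 n from (Finset.Icc_add_one_left_eq_Ioc 0 n)]
  norm_cast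
  exact Nat.Ioc_filter_dvd_card_eq_div n d

lemma hmoe (m : ℕ) : (∑ d ∈ m.divisors, (μ d : ℝ)) = if m = 1 then 1 else 0 := by
  have h := congrArg (fun f : ArithmeticFunction ℤ => f m) moebius_mul_coe_zeta
  simp only [coe_mul_zeta_apply, one_apply] at h
  rw [← Int.cast_sum, h]
  split_ifs <;> norm_num

lemma hindicator {n : ℕ} {x y : ℕ} (hx : x ∈ Finset.Icc 1 n) (hy : 0 < y) :
    (if Nat.gcd x y = 1 then (1 : ℝ) else 0)
      = ∑ d ∈ Finset.Icc 1 n, if d ∣ x ∧ d ∣ y then (μ d : ℝ) else 0 := by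
  rw [Finset.mem_Icc] at hx
  have hx0 : 0 < x := hx.1
  have hfilter : (Finset.Icc 1 n).filter (fun d => d ∣ x ∧ d ∣ y)
      = (Nat.gcd x y).divisors := by
    ext d
    simp only [Finset.mem_filter, Finset.mem_Icc, Nat.mem_divisors]
    constructor
    · rintro ⟨-, hdx, hdy⟩
      exact ⟨Nat.dvd_gcd hdx hdy, (Nat.gcd_pos_of_pos_left y hx0).ne'⟩
    · rintro ⟨hd, -⟩
      have hdx : d ∣ x := hd.trans (Nat.gcd_dvd_left x y)
      have hdy : d ∣ y := hd.trans (Nat.gcd_dvd_right x y)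
      have hd0 : 0 < d := Nat.pos_of_dvd_of_pos hdx hx0
      exact ⟨⟨hd0, le_trans (Nat.le_of_dvd hx0 hdx) hx.2⟩, hdx, hdy⟩
  rw [← Finset.sum_filter, hfilter, hmoe]

lemma hA {n : ℕ} {y : ℕ} (hy : y ∈ Finset.Icc 1 n) :
    (∑ x ∈ Finset.Icc 1 n, if Nat.gcd x y = 1 then (1 : ℝ) else 0)
      = ∑ d ∈ Finset.Icc 1 n, (if d ∣ y then (μ d : ℝ) * ((n / d : ℕ) : ℝ) else 0) := by
  have hy0 : 0 < y := (Finset.mem_Icc.mp hy).1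
  rw [Finset.sum_congr rfl (fun x hx => hindicator hx hy0), Finset.sum_comm]
  refine Finset.sum_congr rfl fun d _ => ?_
  by_cases hdy : d ∣ y
  · simp only [hdy, and_true]
    calc (∑ x ∈ Finset.Icc 1 n, if d ∣ x then (μ d : ℝ) else 0)
        = ∑ x ∈ Finset.Icc 1 n, (μ d : ℝ) * (if d ∣ x then (1 : ℝ) else 0) := by
          refine Finset.sum_congr rfl fun x _ => ?_
          split_ifs <;> ring
      _ = (μ d : ℝ) * ((n / d : ℕ) : ℝ) := by rw [← Finset.mul_sum, hdivcount]
  · simp [hdy]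

lemma count_eq (n : ℕ) :
    ((((Finset.Icc 1 n ×ˢ Finset.Icc 1 n ×ˢ Finset.Icc 1 n).filter
        (fun t => Nat.gcd t.1 t.2.1 = 1 ∧ Nat.gcd t.2.1 t.2.2 = 1)).card : ℝ))
      = ∑ x ∈ Finset.Icc 1 n ×ˢ Finset.Icc 1 n,
          (μ x.1 : ℝ) * (μ x.2 : ℝ) * ((n / x.1 : ℕ) : ℝ) *
            ((n / Nat.lcm x.1 x.2 : ℕ) : ℝ) * ((n / x.2 : ℕ) : ℝ) := by
  have h1 : ((((Finset.Icc 1 n ×ˢ Finset.Icc 1 n ×ˢ Finset.Icc 1 n).filter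
        (fun t => Nat.gcd t.1 t.2.1 = 1 ∧ Nat.gcd t.2.1 t.2.2 = 1)).card : ℝ))
      = ∑ y ∈ Finset.Icc 1 n,
          (∑ x ∈ Finset.Icc 1 n, if Nat.gcd x y = 1 then (1 : ℝ) else 0)
            * (∑ z ∈ Finset.Icc 1 n, if Nat.gcd z y = 1 then (1 : ℝ) else 0) := by
    rw [Finset.card_filter]
    push_cast
    rw [Finset.sum_product]
    have inner : ∀ x : ℕ,
        (∑ t2 ∈ Finset.Icc 1 n ×ˢ Finset.Icc 1 n,
          if Nat.gcd x t2.1 = 1 ∧ Nat.gcd t2.1 t2.2 = 1 then (1 : ℝ) else 0)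
        = ∑ y ∈ Finset.Icc 1 n, ((if Nat.gcd x y = 1 then (1 : ℝ) else 0) *
            ∑ z ∈ Finset.Icc 1 n, (if Nat.gcd z y = 1 then (1 : ℝ) else 0)) := by
      intro x
      rw [Finset.sum_product]
      refine Finset.sum_congr rfl fun y _ => ?_
      rw [Finset.mul_sum]
      refine Finset.sum_congr rfl fun z _ => ?_
      have hc : Nat.gcd z y = 1 ↔ Nat.gcd y z = 1 := by rw [Nat.gcd_comm]
      by_cases h1 : Nat.gcd x y = 1 <;> by_cases h2 : Nat.gcd y z = 1 <;>
        simp [h1, h2, hc]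
    rw [Finset.sum_congr rfl (fun x _ => inner x), Finset.sum_comm]
    refine Finset.sum_congr rfl fun y _ => ?_
    rw [← Finset.sum_mul]
  rw [h1]
  have h2 : ∀ y ∈ Finset.Icc 1 n,
      (∑ x ∈ Finset.Icc 1 n, if Nat.gcd x y = 1 then (1 : ℝ) else 0)
        * (∑ z ∈ Finset.Icc 1 n, if Nat.gcd z y = 1 then (1 : ℝ) else 0)
      = ∑ x ∈ Finset.Icc 1 n ×ˢ Finset.Icc 1 n,
          ((if x.1 ∣ y then (μ x.1 : ℝ) * ((n / x.1 : ℕ) : ℝ) else 0) *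
            (if x.2 ∣ y then (μ x.2 : ℝ) * ((n / x.2 : ℕ) : ℝ) else 0)) := by
    intro y hy
    rw [hA hy, Finset.sum_mul_sum, ← Finset.sum_product']
  rw [Finset.sum_congr rfl h2, Finset.sum_comm]
  refine Finset.sum_congr rfl fun x _ => ?_
  have h3 : ∀ y ∈ Finset.Icc 1 n,
      ((if x.1 ∣ y then (μ x.1 : ℝ) * ((n / x.1 : ℕ) : ℝ) else 0) *
        (if x.2 ∣ y then (μ x.2 : ℝ) * ((n / x.2 : ℕ) : ℝ) else 0))
      = ((μ x.1 : ℝ) * ((n / x.1 : ℕ) : ℝ) * ((μ x.2 : ℝ) * ((n / x.2 : ℕ) : ℝ))) *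
          (if Nat.lcm x.1 x.2 ∣ y then (1 : ℝ) else 0) := by
    intro y _
    by_cases h1 : x.1 ∣ y <;> by_cases h2 : x.2 ∣ y
    · rw [if_pos h1, if_pos h2, if_pos (Nat.lcm_dvd h1 h2)]
      ring
    · rw [if_pos h1, if_neg h2, if_neg (fun h => h2 ((Nat.dvd_lcm_right x.1 x.2).trans h))]
      ring
    · rw [if_neg h1, if_pos h2, if_neg (fun h => h1 ((Nat.dvd_lcm_left x.1 x.2).trans h))]
      ring
    · rw [if_neg h1, if_neg h2, if_neg (fun h => h1 ((Nat.dvd_lcm_left x.1 x.2).trans h))]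
      ring
  rw [Finset.sum_congr rfl h3, ← Finset.mul_sum, hdivcount]
  ring

lemma hdivtendsto {d : ℕ} (hd : 0 < d) :
    Filter.Tendsto (fun n : ℕ => ((n / d : ℕ) : ℝ) / n) atTop (nhds (1 / d)) := by
  have hd0 : (0 : ℝ) < d := by positivity
  have hlow : Filter.Tendsto (fun n : ℕ => 1 / (d : ℝ) - 1 / n) atTop (nhds (1 / d)) := by
    simpa using (tendsto_const_nhds (x := 1 / (d : ℝ))
      (f := atTop (α := ℕ))).sub tendsto_one_div_atTop_nhds_zero_nat
  refine tendsto_of_tendsto_of_tendsto_of_le_of_le' hlow tendsto_const_nhds ?_ ?_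
  · filter_upwards [eventually_ge_atTop 1] with n hn
    have hn0 : (0 : ℝ) < n := by exact_mod_cast hn
    have key : (n : ℝ) / d - 1 ≤ ((n / d : ℕ) : ℝ) := by
      have h1 := Nat.div_add_mod n d
      have h2 : n % d < d := Nat.mod_lt n hd
      have h1' : (d : ℝ) * ((n / d : ℕ) : ℝ) + ((n % d : ℕ) : ℝ) = n := by exact_mod_cast h1
      have h2' : ((n % d : ℕ) : ℝ) < d := by exact_mod_cast h2
      rw [sub_le_iff_le_add, div_le_iff₀ hd0]
      nlinarith
    have step : ((n : ℝ) / d - 1) / n ≤ ((n / d : ℕ) : ℝ) / n := by gcongr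
    have heq : ((n : ℝ) / d - 1) / n = 1 / (d : ℝ) - 1 / n := by
      field_simp
    rw [← heq]
    exact step
  · filter_upwards with n
    rcases Nat.eq_zero_or_pos n with rfl | hn
    · simp
    have hn0 : (0 : ℝ) < n := by positivity
    calc ((n / d : ℕ) : ℝ) / n ≤ ((n : ℝ) / d) / n := by gcongr; exact Nat.cast_div_le
      _ = 1 / d := by
          rw [div_div, mul_comm, ← div_div, div_self hn0.ne']

lemma abs_mu_le (d : ℕ) : |(μ d : ℝ)| ≤ 1 := by
  rw [← Int.cast_abs]
  exact_mod_cast (abs_moebius_le_one (n := d))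

/-- The summand for a fixed `n`. -/
def hfun (n : ℕ) : ℕ × ℕ → ℝ := fun x =>
  (μ x.1 : ℝ) * (μ x.2 : ℝ) * ((n / x.1 : ℕ) : ℝ) *
    ((n / Nat.lcm x.1 x.2 : ℕ) : ℝ) * ((n / x.2 : ℕ) : ℝ) / (n : ℝ) ^ 3

lemma hfun_eq_zero {n : ℕ} {x : ℕ × ℕ} (hx : x ∉ Finset.Icc 1 n ×ˢ Finset.Icc 1 n) :
    hfun n x = 0 := by
  rw [Finset.mem_product, not_and_or] at hx
  rcases hx with hx | hx
  · rw [Finset.mem_Icc, not_and_or] at hx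
    have : n / x.1 = 0 := by
      rcases hx with hx | hx
      · have : x.1 = 0 := by omega
        rw [this]
        exact Nat.div_zero n
      · exact Nat.div_eq_of_lt (by omega)
    simp [hfun, this]
  · rw [Finset.mem_Icc, not_and_or] at hx
    have : n / x.2 = 0 := by
      rcases hx with hx | hx
      · have : x.2 = 0 := by omega
        rw [this]
        exact Nat.div_zero n
      · exact Nat.div_eq_of_lt (by omega)
    simp [hfun, this]

lemma prob_eq_tsum (n : ℕ) :
    ((((Finset.Icc 1 n ×ˢ Finset.Icc 1 n ×ˢ Finset.Icc 1 n).filter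
        (fun t => Nat.gcd t.1 t.2.1 = 1 ∧ Nat.gcd t.2.1 t.2.2 = 1)).card : ℝ)) / (n : ℝ) ^ 3
      = ∑' x : ℕ × ℕ, hfun n x := by
  rw [tsum_eq_sum (s := Finset.Icc 1 n ×ˢ Finset.Icc 1 n) (fun x hx => hfun_eq_zero hx),
    count_eq n, Finset.sum_div]
  exact Finset.sum_congr rfl fun x _ => rfl

lemma hfun_tendsto (x : ℕ × ℕ) :
    Filter.Tendsto (fun n : ℕ => hfun n x) atTop (nhds (g x)) := by
  obtain ⟨d, e⟩ := x
  rcases Nat.eq_zero_or_pos d with rfl | hd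
  · have h0 : ∀ n : ℕ, hfun n (0, e) = 0 := fun n => by simp [hfun]
    have hg : g (0, e) = 0 := by simp [g]
    simp only [h0, hg]
    exact tendsto_const_nhds
  rcases Nat.eq_zero_or_pos e with rfl | he
  · have h0 : ∀ n : ℕ, hfun n (d, 0) = 0 := fun n => by simp [hfun]
    have hg : g (d, 0) = 0 := by simp [g]
    simp only [h0, hg]
    exact tendsto_const_nhds
  have hL : 0 < Nat.lcm d e := Nat.pos_of_ne_zero (Nat.lcm_ne_zero hd.ne' he.ne')
  have hcongr : (fun n : ℕ => (μ d : ℝ) * (μ e : ℝ) *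
      (((n / d : ℕ) : ℝ) / n * ((((n / Nat.lcm d e : ℕ) : ℝ) / n) *
        (((n / e : ℕ) : ℝ) / n)))) =ᶠ[atTop] (fun n : ℕ => hfun n (d, e)) := by
    filter_upwards [eventually_ge_atTop 1] with n hn
    have hn0 : (n : ℝ) ≠ 0 := by positivity
    simp only [hfun]
    field_simp
  have hmul : Filter.Tendsto (fun n : ℕ => (μ d : ℝ) * (μ e : ℝ) *
      (((n / d : ℕ) : ℝ) / n * ((((n / Nat.lcm d e : ℕ) : ℝ) / n) *
        (((n / e : ℕ) : ℝ) / n)))) atTop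
      (nhds ((μ d : ℝ) * (μ e : ℝ) * (1 / d * (1 / (Nat.lcm d e : ℝ) * (1 / e))))) :=
    Filter.Tendsto.const_mul _ ((hdivtendsto hd).mul ((hdivtendsto hL).mul (hdivtendsto he)))
  have hval : (μ d : ℝ) * (μ e : ℝ) * (1 / d * (1 / (Nat.lcm d e : ℝ) * (1 / e))) = g (d, e) := by
    rw [g]
    have h1 : (d : ℝ) ≠ 0 := by positivity
    have h2 : (e : ℝ) ≠ 0 := by positivity
    have h3 : ((Nat.lcm d e : ℕ) : ℝ) ≠ 0 := by positivity
    rw [div_mul_div_comm, div_mul_div_comm, one_mul, one_mul, mul_one_div]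
    congr 1
    ring
  rw [hval] at hmul
  exact hmul.congr' hcongr

lemma hfun_bound (n : ℕ) (x : ℕ × ℕ) : ‖hfun n x‖ ≤ bnd x := by
  obtain ⟨d, e⟩ := x
  rcases Nat.eq_zero_or_pos d with rfl | hd
  · simp only [hfun]
    simp
    exact bnd_nonneg _
  rcases Nat.eq_zero_or_pos e with rfl | he
  · simp only [hfun]
    simp
    exact bnd_nonneg _
  rcases Nat.eq_zero_or_pos n with rfl | hn
  · simp only [hfun]
    simp
    exact bnd_nonneg _
  have hL : 0 < Nat.lcm d e := Nat.pos_of_ne_zero (Nat.lcm_ne_zero hd.ne' he.ne')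
  have hn0 : (0 : ℝ) < n := by positivity
  have hd0 : (0 : ℝ) < d := by positivity
  have he0 : (0 : ℝ) < e := by positivity
  have hL0 : (0 : ℝ) < (Nat.lcm d e : ℕ) := by positivity
  have habs : |(μ d : ℝ) * (μ e : ℝ) * ((n / d : ℕ) : ℝ) *
      ((n / Nat.lcm d e : ℕ) : ℝ) * ((n / e : ℕ) : ℝ)|
      ≤ (n : ℝ) / d * ((n : ℝ) / (Nat.lcm d e : ℕ)) * ((n : ℝ) / e) := by
    calc |(μ d : ℝ) * (μ e : ℝ) * ((n / d : ℕ) : ℝ) *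
        ((n / Nat.lcm d e : ℕ) : ℝ) * ((n / e : ℕ) : ℝ)|
        = |(μ d : ℝ)| * |(μ e : ℝ)| * |((n / d : ℕ) : ℝ)| *
          |((n / Nat.lcm d e : ℕ) : ℝ)| * |((n / e : ℕ) : ℝ)| := by
          rw [abs_mul, abs_mul, abs_mul, abs_mul]
      _ ≤ 1 * 1 * ((n : ℝ) / d) * ((n : ℝ) / (Nat.lcm d e : ℕ)) * ((n : ℝ) / e) := by
          have c1 : |((n / d : ℕ) : ℝ)| ≤ (n : ℝ) / d := by
            rw [abs_of_nonneg (Nat.cast_nonneg _)]; exact Nat.cast_div_le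
          have c2 : |((n / Nat.lcm d e : ℕ) : ℝ)| ≤ (n : ℝ) / (Nat.lcm d e : ℕ) := by
            rw [abs_of_nonneg (Nat.cast_nonneg _)]; exact Nat.cast_div_le
          have c3 : |((n / e : ℕ) : ℝ)| ≤ (n : ℝ) / e := by
            rw [abs_of_nonneg (Nat.cast_nonneg _)]; exact Nat.cast_div_le
          gcongr
          · exact abs_mu_le d
          · exact abs_mu_le e
      _ = (n : ℝ) / d * ((n : ℝ) / (Nat.lcm d e : ℕ)) * ((n : ℝ) / e) := by ring
  calc ‖hfun n (d, e)‖
      = |(μ d : ℝ) * (μ e : ℝ) * ((n / d : ℕ) : ℝ) *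
          ((n / Nat.lcm d e : ℕ) : ℝ) * ((n / e : ℕ) : ℝ)| / (n : ℝ) ^ 3 := by
        rw [hfun, Real.norm_eq_abs, abs_div, abs_of_pos (by positivity : (0:ℝ) < (n:ℝ)^3)]
    _ ≤ ((n : ℝ) / d * ((n : ℝ) / (Nat.lcm d e : ℕ)) * ((n : ℝ) / e)) / (n : ℝ) ^ 3 := by
        gcongr
    _ = 1 / ((d : ℝ) * e * (Nat.lcm d e : ℝ)) := by
        field_simp
    _ ≤ bnd (d, e) := one_div_le_bnd hd he

lemma count_side :
    Filter.Tendsto (fun n : ℕ =>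
        ((((Finset.Icc 1 n ×ˢ Finset.Icc 1 n ×ˢ Finset.Icc 1 n).filter
            (fun t => Nat.gcd t.1 t.2.1 = 1 ∧ Nat.gcd t.2.1 t.2.2 = 1)).card : ℝ))
          / (n : ℝ) ^ 3) atTop (nhds (∑' x : ℕ × ℕ, g x)) := by
  have h := tendsto_tsum_of_dominated_convergence (f := fun (n : ℕ) (x : ℕ × ℕ) => hfun n x)
    (g := g) (bound := bnd) bnd_summable hfun_tendsto
    (Filter.Eventually.of_forall (fun n x => hfun_bound n x))
  exact h.congr (fun n => (prob_eq_tsum n).symm)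

end PathThree

end

/-- For three independent uniform random integers `X₁, X₂, X₃` on `[n]`,
`P(gcd(X₁,X₂) = 1 and gcd(X₂,X₃) = 1)` converges, as `n → ∞`, to
`∏_{p prime} (1 − 1/p)(1 + 1/p − 1/p²)`. -/
theorem path_three_coprime_tendsto :
    ∃ L : ℝ,
      Tendsto (fun N : ℕ =>
          ∏ p ∈ (Finset.range N).filter Nat.Prime,
            (1 - 1 / (p : ℝ)) * (1 + 1 / (p : ℝ) - 1 / (p : ℝ) ^ 2))
        atTop (nhds L) ∧
      Tendsto (fun n : ℕ =>
          (((Finset.Icc 1 n ×ˢ Finset.Icc 1 n ×ˢ Finset.Icc 1 n).filter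
              (fun t => Nat.gcd t.1 t.2.1 = 1 ∧ Nat.gcd t.2.1 t.2.2 = 1)).card : ℝ)
            / (n : ℝ) ^ 3)
        atTop (nhds L) := by
  refine ⟨∑' n, PathThree.f n, PathThree.euler_side, ?_⟩
  rw [PathThree.tsum_f_eq_tsum_g]
  exact PathThree.count_side
end

section
/- Every Catalan word of length 2k has exactly k + 1 generating vertices (position 0 together with the k positions of first occurrences of letters), and the graph obtained from the cycle 0—1—⋯—(2k−1)—0 by identifying vertices forced equal by the (C2) constraints of the word is a tree on k + 1 vertices. -/
/-- A word (list of letters) can be reduced to the empty word by successively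
deleting adjacent double letters. -/
inductive ReducesToNil : List ℕ → Prop
  | nil : ReducesToNil []
  | step (l₁ l₂ : List ℕ) (a : ℕ) :
      ReducesToNil (l₁ ++ l₂) → ReducesToNil (l₁ ++ a :: a :: l₂)

/-- A Catalan word: every letter appears exactly twice (pair-matched), the letters
`0, 1, 2, …` appear in order of first occurrence, and the word can be reduced to the
empty word by successively deleting adjacent double letters. -/
def IsCatalanWord (w : List ℕ) : Prop :=
  (∀ a ∈ w, w.count a = 2) ∧
  (∀ a b : ℕ, a < b → b ∈ w → a ∈ w ∧ w.idxOf a < w.idxOf b) ∧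
  ReducesToNil w

/-- The (C2)-constraint relation on the vertices `ZMod (length w)` of the cycle
`0 — 1 — ⋯ — (2k−1) — 0`: matched positions `i < j` with `w[i] = w[j]` force the
identifications `π(i) = π(j+1)` and `π(i+1) = π(j)`. -/
def c2Rel (w : List ℕ) : ZMod w.length → ZMod w.length → Prop := fun u v =>
  ∃ i j : ℕ, i < j ∧ j < w.length ∧ w.getD i 0 = w.getD j 0 ∧
    ((u = (i : ZMod w.length) ∧ v = ((j + 1 : ℕ) : ZMod w.length)) ∨
     (u = ((i + 1 : ℕ) : ZMod w.length) ∧ v = ((j : ℕ) : ZMod w.length)))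

/-- The vertex set of the quotient graph: cycle vertices modulo the equivalence
generated by the (C2) constraints of `w`. -/
def QuotVert (w : List ℕ) : Type := Quotient (Relation.EqvGen.setoid (c2Rel w))

/-- The quotient graph `G(w)`: the image of the cycle
`0 — 1 — ⋯ — (2k−1) — 0` in the quotient of its vertex set by the (C2)
identifications. -/
def Gw (w : List ℕ) : SimpleGraph (QuotVert w) :=
  SimpleGraph.fromRel (fun x y => ∃ i : ℕ, i < w.length ∧
    x = Quotient.mk (Relation.EqvGen.setoid (c2Rel w)) ((i : ZMod w.length)) ∧
    y = Quotient.mk (Relation.EqvGen.setoid (c2Rel w)) (((i + 1 : ℕ) : ZMod w.length)))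




namespace CWT

/-- One step of the stack reduction. -/
def rstep (s : List ℕ) (x : ℕ) : List ℕ := if s.head? = some x then s.tail else x :: s

/-- Stack after reading a word. -/
def stk (l : List ℕ) : List ℕ := l.foldl rstep []

/-- Reduced stacks: no two adjacent equal letters. -/
def Red (s : List ℕ) : Prop := s.Chain' (· ≠ ·)

lemma red_rstep {s : List ℕ} (h : Red s) (x : ℕ) : Red (rstep s x) := by
  unfold rstep
  split
  · cases s with
    | nil => exact h
    | cons a t => exact (List.isChain_cons.1 h).2
  · exact List.isChain_cons.2 ⟨fun y hy => by
      rename_i hne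
      intro hxy
      exact hne (by cases s with
        | nil => simp at hy
        | cons a t => simp at hy; simp [hy] at hxy ⊢; exact hxy.symm), h⟩

lemma red_foldl {s : List ℕ} (h : Red s) (l : List ℕ) : Red (l.foldl rstep s) := by
  induction l generalizing s with
  | nil => exact h
  | cons a l ih => exact ih (red_rstep h a)

lemma red_stk (l : List ℕ) : Red (stk l) := red_foldl (by unfold Red; exact List.isChain_nil) l

lemma rstep_rstep {s : List ℕ} (h : Red s) (x : ℕ) : rstep (rstep s x) x = s := by
  unfold rstep
  split
  · rename_i hx
    cases s with
    | nil => simp at hx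
    | cons a t =>
      simp only [List.head?_cons, Option.some.injEq] at hx
      subst hx
      simp only [List.tail_cons]
      cases t with
      | nil => simp
      | cons b t' =>
        have hb : a ≠ b := (List.isChain_cons_cons.1 h).1
        simp [Ne.symm hb]
  · simp

lemma foldl_cancel {s : List ℕ} (h : Red s) (x : ℕ) (r : List ℕ) :
    (x :: x :: r).foldl rstep s = r.foldl rstep s := by
  simp only [List.foldl_cons]
  rw [rstep_rstep h]

lemma mem_foldl {s l : List ℕ} {x : ℕ} (hx : x ∈ l.foldl rstep s) : x ∈ s ∨ x ∈ l := by
  induction l generalizing s with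
  | nil => exact Or.inl hx
  | cons a l ih =>
    rcases ih hx with h | h
    · unfold rstep at h
      by_cases hs : s.head? = some a
      · rw [if_pos hs] at h
        left; exact List.mem_of_mem_tail h
      · rw [if_neg hs, List.mem_cons] at h
        rcases h with h | h
        · right; simp [h]
        · left; exact h
    · right; exact List.mem_cons_of_mem _ h

lemma mem_stk {l : List ℕ} {x : ℕ} (hx : x ∈ stk l) : x ∈ l := by
  rcases mem_foldl hx with h | h
  · simp at h
  · exact h

lemma stk_append (l r : List ℕ) : stk (l ++ r) = r.foldl rstep (stk l) :=
  List.foldl_append ..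

lemma stk_push {l : List ℕ} {x : ℕ} (hx : x ∉ l) : stk (l ++ [x]) = x :: stk l := by
  rw [stk_append]
  simp only [List.foldl_cons, List.foldl_nil]
  unfold rstep
  split
  · rename_i hh
    exact absurd (mem_stk (by cases hs : stk l with
      | nil => rw [hs] at hh; simp at hh
      | cons a t => rw [hs] at hh; simp at hh; simp [hs, hh])) hx
  · rfl

end CWT

namespace CWT

lemma reduces_stk {w : List ℕ} (h : ReducesToNil w) : stk w = [] := by
  induction h with
  | nil => rfl
  | step l₁ l₂ a _ ih =>
    rw [stk_append, foldl_cancel (red_stk l₁), ← stk_append, ih]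

lemma counts_drop {l₁ l₂ : List ℕ} {a : ℕ}
    (hw : ∀ b ∈ (l₁ ++ a :: a :: l₂), (l₁ ++ a :: a :: l₂).count b = 2) :
    a ∉ l₁ ++ l₂ ∧ ∀ b ∈ l₁ ++ l₂, (l₁ ++ l₂).count b = 2 := by
  have hca := hw a (by simp)
  rw [List.count_append, List.count_cons_self, List.count_cons_self] at hca
  have h1 : l₁.count a = 0 ∧ l₂.count a = 0 := by omega
  have hna : a ∉ l₁ ++ l₂ := by
    rw [List.mem_append]
    rintro (h | h)
    · exact (List.count_eq_zero.1 h1.1) h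
    · exact (List.count_eq_zero.1 h1.2) h
  refine ⟨hna, fun b hb => ?_⟩
  have hbne : b ≠ a := fun h => hna (h ▸ hb)
  have hcb := hw b (by rcases List.mem_append.1 hb with h | h <;> simp [h])
  rw [List.count_append, List.count_cons_of_ne hbne.symm, List.count_cons_of_ne hbne.symm] at hcb
  rw [List.count_append]
  omega

lemma ML {w : List ℕ} (hr : ReducesToNil w) :
    (∀ b ∈ w, w.count b = 2) →
    ∀ i j : ℕ, i < j → j < w.length → w.getD i 0 = w.getD j 0 →
      stk (w.take (j + 1)) = stk (w.take i) ∧ stk (w.take j) = stk (w.take (i + 1)) := by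
  induction hr with
  | nil => intro _ i j _ hj _; simp at hj
  | step l₁ l₂ a _ ih =>
    intro hw i j hij hjlen heq
    obtain ⟨hna, hw'⟩ := counts_drop hw
    set p := l₁.length with hp
    have hlen : (l₁ ++ a :: a :: l₂).length = p + 2 + l₂.length := by
      simp [hp]; omega
    have hlen' : (l₁ ++ l₂).length = p + l₂.length := by simp [hp]
    -- value translation lemmas
    have hgetL : ∀ q, q < p → (l₁ ++ a :: a :: l₂).getD q 0 = (l₁ ++ l₂).getD q 0 := by
      intro q hq
      rw [List.getD_append _ _ _ _ hq, List.getD_append _ _ _ _ hq]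
    have hgetR : ∀ q, p ≤ q → (l₁ ++ a :: a :: l₂).getD (q + 2) 0 = (l₁ ++ l₂).getD q 0 := by
      intro q hq
      rw [List.getD_append_right _ _ _ _ (by omega : l₁.length ≤ q + 2),
          List.getD_append_right _ _ _ _ (by omega : l₁.length ≤ q)]
      have : q + 2 - l₁.length = (q - l₁.length) + 2 := by omega
      rw [this, List.getD_cons_succ, List.getD_cons_succ]
    have hgetp : (l₁ ++ a :: a :: l₂).getD p 0 = a := by
      rw [List.getD_append_right _ _ _ _ (le_refl _), Nat.sub_self, List.getD_cons_zero]
    have hgetp1 : (l₁ ++ a :: a :: l₂).getD (p + 1) 0 = a := by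
      rw [List.getD_append_right _ _ _ _ (by omega : l₁.length ≤ p + 1)]
      have : p + 1 - l₁.length = 1 := by omega
      rw [this, List.getD_cons_succ, List.getD_cons_zero]
    -- no `a` outside positions p, p+1
    have hA : ∀ q, q < p → (l₁ ++ a :: a :: l₂).getD q 0 ≠ a := by
      intro q hq h
      rw [hgetL q hq] at h
      apply hna
      rw [← h]
      have hq' : q < (l₁ ++ l₂).length := by omega
      rw [List.getD_eq_getElem _ _ hq']
      exact List.getElem_mem _
    have hB : ∀ q, p + 2 ≤ q → q < (l₁ ++ a :: a :: l₂).length →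
        (l₁ ++ a :: a :: l₂).getD q 0 ≠ a := by
      intro q hq hqlen h
      obtain ⟨q', rfl⟩ : ∃ q', q = q' + 2 := ⟨q - 2, by omega⟩
      rw [hgetR q' (by omega)] at h
      apply hna
      rw [← h]
      have hq' : q' < (l₁ ++ l₂).length := by omega
      rw [List.getD_eq_getElem _ _ hq']
      exact List.getElem_mem _
    -- take translation lemmas
    have htakeL : ∀ q, q ≤ p → (l₁ ++ a :: a :: l₂).take q = (l₁ ++ l₂).take q := by
      intro q hq
      rw [List.take_append_of_le_length hq, List.take_append_of_le_length hq]
    have htakeR : ∀ q, p ≤ q →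
        stk ((l₁ ++ a :: a :: l₂).take (q + 2)) = stk ((l₁ ++ l₂).take q) := by
      intro q hq
      rw [List.take_append, List.take_append,
          List.take_of_length_le (by omega : l₁.length ≤ q + 2),
          List.take_of_length_le (by omega : l₁.length ≤ q)]
      have h2 : q + 2 - l₁.length = (q - l₁.length) + 2 := by omega
      rw [h2]
      show stk (l₁ ++ (a :: a :: l₂.take (q - l₁.length))) = _
      rw [stk_append, foldl_cancel (red_stk l₁), ← stk_append]
    -- case analysis
    by_cases hip : i = p
    · subst hip
      have hjv : (l₁ ++ a :: a :: l₂).getD j 0 = a := by rw [← heq, hgetp]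
      have hj1 : j = p + 1 := by
        by_contra hne
        exact hB j (by omega) hjlen hjv
      subst hj1
      constructor
      · have h1 := htakeR p (le_refl p)
        rw [h1, htakeL p (le_refl p)]
      · rfl
    by_cases hip1 : i = p + 1
    · exfalso
      have hiv : (l₁ ++ a :: a :: l₂).getD i 0 = a := by rw [hip1, hgetp1]
      exact hB j (by omega) hjlen (by rw [← heq, hiv])
    by_cases hjp : j = p
    · exfalso
      have hiv : (l₁ ++ a :: a :: l₂).getD i 0 = a := by rw [heq, hjp, hgetp]
      exact hA i (by omega) hiv
    by_cases hjp1 : j = p + 1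
    · exfalso
      have hiv : (l₁ ++ a :: a :: l₂).getD i 0 = a := by rw [heq, hjp1, hgetp1]
      exact hA i (by omega) hiv
    -- now i, j ∉ {p, p+1}
    have hicase : i < p ∨ p + 2 ≤ i := by omega
    have hjcase : j < p ∨ p + 2 ≤ j := by omega
    rcases hicase with hi | hi
    · rcases hjcase with hj | hj
      · -- both left
        obtain ⟨e1, e2⟩ := ih hw' i j hij (by omega) (by rw [← hgetL i hi, ← hgetL j hj, heq])
        rw [htakeL (j+1) (by omega), htakeL i (by omega), htakeL j (by omega),
            htakeL (i+1) (by omega)]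
        exact ⟨e1, e2⟩
      · -- i left, j right
        obtain ⟨j', rfl⟩ : ∃ j', j = j' + 2 := ⟨j - 2, by omega⟩
        have hj' : p ≤ j' := by omega
        obtain ⟨e1, e2⟩ := ih hw' i j' (by omega) (by omega)
          (by rw [← hgetL i hi, ← hgetR j' hj', heq])
        constructor
        · have := htakeR (j' + 1) (by omega)
          rw [show j' + 2 + 1 = (j' + 1) + 2 by omega, this, htakeL i (by omega)]
          exact e1
        · rw [htakeR j' hj', htakeL (i+1) (by omega)]
          exact e2
    · -- both right
      have hj : p + 2 ≤ j := by omega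
      obtain ⟨i', rfl⟩ : ∃ i', i = i' + 2 := ⟨i - 2, by omega⟩
      obtain ⟨j', rfl⟩ : ∃ j', j = j' + 2 := ⟨j - 2, by omega⟩
      have hi' : p ≤ i' := by omega
      have hj' : p ≤ j' := by omega
      obtain ⟨e1, e2⟩ := ih hw' i' j' (by omega) (by omega)
        (by rw [← hgetR i' hi', ← hgetR j' hj', heq])
      constructor
      · rw [show j' + 2 + 1 = (j' + 1) + 2 by omega, htakeR (j' + 1) (by omega),
            htakeR i' hi']
        exact e1
      · rw [show i' + 2 + 1 = (i' + 1) + 2 by omega, htakeR (i' + 1) (by omega),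
            htakeR j' hj']
        exact e2

end CWT

namespace CWT

lemma indexOf_lt_of_mem_take {l : List ℕ} {x : ℕ} {m : ℕ} (h : x ∈ l.take m) :
    l.idxOf x < m := by
  conv_lhs => rw [← List.take_append_drop m l]
  rw [List.idxOf_append_of_mem h]
  have h1 : (l.take m).idxOf x < (l.take m).length := List.idxOf_lt_length_iff.2 h
  have h2 : (l.take m).length ≤ m := by simp
  omega

lemma not_mem_take_indexOf {l : List ℕ} {x : ℕ} : x ∉ l.take (l.idxOf x) :=
  fun h => lt_irrefl _ (indexOf_lt_of_mem_take h)

lemma getD_indexOf {l : List ℕ} {x : ℕ} (h : x ∈ l) :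
    l.getD (l.idxOf x) 0 = x := by
  rw [List.getD_eq_getElem _ _ (List.idxOf_lt_length_iff.2 h)]
  exact List.getElem_idxOf _

lemma indexOf_le_of_getD {l : List ℕ} {x : ℕ} : ∀ {j}, j < l.length → l.getD j 0 = x →
    l.idxOf x ≤ j := by
  intro j hj hx
  by_contra hc
  push_neg at hc
  rw [List.getD_eq_getElem _ _ hj] at hx
  exact not_mem_take_indexOf (l := l) (x := x)
    (List.mem_take_iff_getElem.2 ⟨j, by omega, hx⟩)

lemma take_succ_getD {l : List ℕ} {m : ℕ} (h : m < l.length) :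
    l.take (m + 1) = l.take m ++ [l.getD m 0] := by
  rw [List.take_succ, List.getElem?_eq_getElem h, List.getD_eq_getElem _ _ h]
  rfl

lemma stk_take_indexOf_succ {w : List ℕ} {b : ℕ} (hb : b ∈ w) :
    stk (w.take (w.idxOf b + 1)) = b :: stk (w.take (w.idxOf b)) := by
  rw [take_succ_getD (List.idxOf_lt_length_iff.2 hb), getD_indexOf hb,
    stk_push not_mem_take_indexOf]

lemma indexOf_add_one_lt {w : List ℕ} (hw : ∀ a ∈ w, w.count a = 2) {b : ℕ} (hb : b ∈ w) :
    w.idxOf b + 1 < w.length := by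
  have hq := List.idxOf_lt_length_iff.2 hb
  rcases lt_or_eq_of_le (Nat.succ_le_of_lt hq) with h | h
  · exact h
  · exfalso
    have hcount := hw b hb
    have hsplit : w = w.take (w.idxOf b) ++ w.drop (w.idxOf b) :=
      (List.take_append_drop _ _).symm
    have hdrop : w.drop (w.idxOf b) = [b] := by
      rw [List.drop_eq_getElem_cons hq]
      have : w.drop (w.idxOf b + 1) = [] := by
        rw [List.drop_eq_nil_iff]
        omega
      rw [this, List.getElem_idxOf]
    rw [hsplit, List.count_append, hdrop] at hcount
    have : (w.take (w.idxOf b)).count b = 0 := List.count_eq_zero.2 not_mem_take_indexOf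
    simp [this] at hcount
end CWT

namespace CWT

lemma eqv_stk {w : List ℕ} [NeZero w.length] (hr : ReducesToNil w)
    (hw : ∀ a ∈ w, w.count a = 2) {u v : ZMod w.length}
    (h : Relation.EqvGen (c2Rel w) u v) :
    stk (w.take u.val) = stk (w.take v.val) := by
  have hmod : ∀ q, q ≤ w.length →
      stk (w.take (((q : ℕ) : ZMod w.length)).val) = stk (w.take q) := by
    intro q hq
    rw [ZMod.val_natCast]
    rcases lt_or_eq_of_le hq with h' | h'
    · rw [Nat.mod_eq_of_lt h']
    · rw [h', Nat.mod_self, List.take_length, List.take_zero, reduces_stk hr]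
      rfl
  induction h with
  | rel u v huv =>
    obtain ⟨i, j, hij, hjlen, heq, hor⟩ := huv
    obtain ⟨e1, e2⟩ := ML hr hw i j hij hjlen heq
    rcases hor with ⟨hu, hv⟩ | ⟨hu, hv⟩
    · rw [hu, hv, hmod i (by omega), hmod (j + 1) (by omega)]
      exact e1.symm
    · rw [hu, hv, hmod (i + 1) (by omega), hmod j (by omega)]
      exact e2.symm
  | refl => rfl
  | symm _ _ _ ih => exact ih.symm
  | trans _ _ _ _ _ ih1 ih2 => exact ih1.trans ih2

/-- The canonical (generating) position with the same stack as position `q`. -/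
def canonIdx (w : List ℕ) (q : ℕ) : ℕ :=
  match stk (w.take q) with
  | [] => 0
  | b :: _ => w.idxOf b + 1

lemma canonIdx_congr {w : List ℕ} {q q' : ℕ} (h : stk (w.take q) = stk (w.take q')) :
    canonIdx w q = canonIdx w q' := by
  unfold canonIdx
  rw [h]

lemma canonIdx_eq_nil {w : List ℕ} {q : ℕ} (h : stk (w.take q) = []) :
    canonIdx w q = 0 := by
  unfold canonIdx
  rw [h]

lemma canonIdx_eq_cons {w : List ℕ} {q b : ℕ} {t : List ℕ} (h : stk (w.take q) = b :: t) :
    canonIdx w q = w.idxOf b + 1 := by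
  unfold canonIdx
  rw [h]

lemma indexOf_getD_of_not_mem_take {l : List ℕ} {m : ℕ} (hm : m < l.length)
    (h : l.getD m 0 ∉ l.take m) : l.idxOf (l.getD m 0) = m := by
  set x := l.getD m 0 with hx
  have hsplit : l = l.take m ++ x :: l.drop (m + 1) := by
    conv_lhs => rw [← List.take_append_drop m l]
    rw [List.drop_eq_getElem_cons hm, hx, List.getD_eq_getElem _ _ hm]
  conv_lhs => rw [hsplit]
  rw [List.idxOf_append_of_notMem h, List.idxOf_cons_self]
  simp [Nat.min_eq_left (le_of_lt hm)]

lemma back {w : List ℕ} [NeZero w.length] (hr : ReducesToNil w)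
    (hw : ∀ a ∈ w, w.count a = 2) :
    ∀ i, i < w.length →
      Relation.EqvGen (c2Rel w) (i : ZMod w.length) ((canonIdx w i : ℕ) : ZMod w.length) := by
  intro i
  induction i using Nat.strong_induction_on with
  | _ i IH =>
    intro hi
    match i with
    | 0 =>
      rw [canonIdx_eq_nil (by rw [List.take_zero]; rfl)]
      exact Relation.EqvGen.refl _
    | (m + 1) =>
      by_cases hxm : w.getD m 0 ∈ w.take m
      · set x := w.getD m 0 with hx
        have hq : w.idxOf x < m := indexOf_lt_of_mem_take hxm
        have hxw : x ∈ w := List.mem_of_mem_take hxm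
        have heq : w.getD (w.idxOf x) 0 = w.getD m 0 := by rw [getD_indexOf hxw]
        have hrel : c2Rel w ((w.idxOf x : ℕ) : ZMod w.length) ((m + 1 : ℕ) : ZMod w.length) :=
          ⟨w.idxOf x, m, hq, by omega, heq, Or.inl ⟨rfl, rfl⟩⟩
        have e1 := (ML hr hw (w.idxOf x) m hq (by omega) heq).1
        have hcanon : canonIdx w (m + 1) = canonIdx w (w.idxOf x) := canonIdx_congr e1
        rw [hcanon]
        exact Relation.EqvGen.trans _ _ _
          (Relation.EqvGen.symm _ _ (Relation.EqvGen.rel _ _ hrel))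
          (IH (w.idxOf x) (by omega) (by omega))
      · have hmlt : m < w.length := by omega
        have hpush : stk (w.take (m + 1)) = w.getD m 0 :: stk (w.take m) := by
          rw [take_succ_getD hmlt, stk_push hxm]
        have hidx : w.idxOf (w.getD m 0) = m := indexOf_getD_of_not_mem_take hmlt hxm
        rw [canonIdx_eq_cons hpush, hidx]
        exact Relation.EqvGen.refl _

lemma letters {w : List ℕ} {k : ℕ} (hlen : w.length = 2 * k)
    (hw : ∀ a ∈ w, w.count a = 2)
    (hord : ∀ a b : ℕ, a < b → b ∈ w → a ∈ w ∧ w.idxOf a < w.idxOf b) :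
    (∀ b : ℕ, b ∈ w ↔ b < k) ∧ w.toFinset.card = k := by
  have hsum : ∑ b ∈ w.toFinset, w.count b = w.length := by
    have := Multiset.toFinset_sum_count_eq (↑w : Multiset ℕ)
    simpa using this
  have h2 : ∑ b ∈ w.toFinset, w.count b = 2 * w.toFinset.card := by
    rw [Finset.sum_congr rfl (fun b hb => hw b (List.mem_toFinset.1 hb)),
      Finset.sum_const, smul_eq_mul, mul_comm]
  have hcard : w.toFinset.card = k := by omega
  have hforward : ∀ b ∈ w, b < k := by
    intro b hb
    have hsub : Finset.range (b + 1) ⊆ w.toFinset := by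
      intro a ha
      rw [Finset.mem_range] at ha
      rw [List.mem_toFinset]
      rcases lt_or_eq_of_le (Nat.lt_succ_iff.1 ha) with h | h
      · exact (hord a b h hb).1
      · exact h ▸ hb
    have := Finset.card_le_card hsub
    rw [Finset.card_range, hcard] at this
    omega
  refine ⟨fun b => ⟨hforward b, fun hbk => ?_⟩, hcard⟩
  have hsub : w.toFinset ⊆ Finset.range k :=
    fun a ha => Finset.mem_range.2 (hforward a (List.mem_toFinset.1 ha))
  have heq : w.toFinset = Finset.range k :=
    Finset.eq_of_subset_of_card_le hsub (by simp [hcard])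
  rw [← List.mem_toFinset, heq, Finset.mem_range]
  exact hbk

lemma isTree_of_connected_of_ncard_le {V : Type} [Fintype V] :
    ∀ (m : ℕ) (G : SimpleGraph V), G.Connected → G.edgeSet.ncard = m →
      m + 1 ≤ Fintype.card V → G.IsTree := by
  classical
  intro m
  induction m using Nat.strong_induction_on with
  | _ m IH =>
    intro G hc hm hle
    by_cases hac : G.IsAcyclic
    · exact ⟨hc, hac⟩
    exfalso
    rw [SimpleGraph.isAcyclic_iff_forall_edge_isBridge] at hac
    push_neg at hac
    obtain ⟨e, he, hbr⟩ := hac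
    revert he hbr
    induction e using Sym2.ind with
    | _ u v =>
      intro he hbr
      have hadj : G.Adj u v := G.mem_edgeSet.1 he
      have hreach : (G \ SimpleGraph.fromEdgeSet {s(u, v)}).Reachable u v := by
        rw [SimpleGraph.isBridge_iff] at hbr
        push_neg at hbr
        exact hbr
      set G' := G \ SimpleGraph.fromEdgeSet {s(u, v)} with hG'
      have hsub : ∀ x y, G.Adj x y → G'.Reachable x y := by
        intro x y hxy
        by_cases hxy' : s(x, y) = s(u, v)
        · rw [Sym2.eq_iff] at hxy'
          rcases hxy' with ⟨rfl, rfl⟩ | ⟨rfl, rfl⟩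
          · exact hreach
          · exact hreach.symm
        · refine SimpleGraph.Adj.reachable ?_
          rw [hG', SimpleGraph.sdiff_adj]
          refine ⟨hxy, ?_⟩
          rw [SimpleGraph.fromEdgeSet_adj]
          rintro ⟨h1, h2⟩
          exact hxy' h1
      have hconn' : G'.Connected := by
        have hpre : G'.Preconnected := by
          intro x y
          obtain ⟨p⟩ := hc.preconnected x y
          induction p with
          | nil => exact SimpleGraph.Reachable.refl _
          | cons h q ih => exact (hsub _ _ h).trans ih
        haveI := hc.nonempty
        exact ⟨hpre⟩
      have hedg : G'.edgeSet = G.edgeSet \ {s(u, v)} := by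
        rw [hG', SimpleGraph.edgeSet_sdiff, SimpleGraph.edgeSet_fromEdgeSet,
          SimpleGraph.edgeSet_sdiff_sdiff_isDiag]
      have hn : G'.edgeSet.ncard = m - 1 := by
        rw [hedg, Set.ncard_diff_singleton_of_mem he, hm]
      have hm1 : 1 ≤ m := by
        have hpos : 0 < G.edgeSet.ncard :=
          (Set.ncard_pos (G.edgeSet.toFinite)).2 ⟨_, he⟩
        omega
      have htree' : G'.IsTree := IH (m - 1) (by omega) G' hconn' hn (by omega)
      haveI : Fintype G'.edgeSet := Fintype.ofFinite _
      have hcard := htree'.card_edgeFinset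
      have hfin : G'.edgeFinset.card = G'.edgeSet.ncard := by
        rw [Set.ncard_eq_toFinset_card']; congr 1
      rw [hfin, hn] at hcard
      omega

end CWT

namespace CWT

/-- The image of cycle position `q` in the quotient vertex set. -/
def vtx (w : List ℕ) (q : ℕ) : QuotVert w :=
  Quotient.mk (Relation.EqvGen.setoid (c2Rel w)) ((q : ZMod w.length))

lemma vtx_sound {w : List ℕ} {q q' : ℕ}
    (h : Relation.EqvGen (c2Rel w) ((q : ℕ) : ZMod w.length) ((q' : ℕ) : ZMod w.length)) :
    vtx w q = vtx w q' :=
  Quotient.sound h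

lemma vtx_exact {w : List ℕ} {q q' : ℕ} (h : vtx w q = vtx w q') :
    Relation.EqvGen (c2Rel w) ((q : ℕ) : ZMod w.length) ((q' : ℕ) : ZMod w.length) :=
  Quotient.exact h

section Main

variable {w : List ℕ} {k : ℕ}

lemma quot_card (hk : 1 ≤ k) (hlen : w.length = 2 * k)
    (hw : ∀ a ∈ w, w.count a = 2)
    (hmem : ∀ b : ℕ, b ∈ w ↔ b < k)
    (hr : ReducesToNil w) :
    Nat.card (QuotVert w) = k + 1 := by
  haveI : NeZero w.length := ⟨by omega⟩
  set n := w.length with hn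
  -- the bijection
  set f : Option (Fin k) → QuotVert w := fun o =>
    match o with
    | none => vtx w 0
    | some b => vtx w (w.idxOf (b : ℕ) + 1) with hf
  have hstkb : ∀ b : Fin k,
      stk (w.take (w.idxOf (b : ℕ) + 1)) = (b : ℕ) :: stk (w.take (w.idxOf (b : ℕ))) :=
    fun b => stk_take_indexOf_succ ((hmem _).2 b.isLt)
  have hvalb : ∀ b : Fin k, (((w.idxOf (b : ℕ) + 1 : ℕ)) : ZMod n).val
      = w.idxOf (b : ℕ) + 1 :=
    fun b => ZMod.val_cast_of_lt (indexOf_add_one_lt hw ((hmem _).2 b.isLt))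
  have hval0 : (((0 : ℕ)) : ZMod n).val = 0 := ZMod.val_cast_of_lt (by omega)
  have hinj : Function.Injective f := by
    intro o o' h
    match o, o' with
    | none, none => rfl
    | none, some b =>
      exfalso
      have := eqv_stk hr hw (vtx_exact (w := w) h)
      rw [hval0, hvalb b, List.take_zero, hstkb b] at this
      exact absurd this (by simp [stk])
    | some b, none =>
      exfalso
      have := eqv_stk hr hw (vtx_exact (w := w) h)
      rw [hval0, hvalb b, List.take_zero, hstkb b] at this
      exact absurd this (by simp [stk])
    | some b, some c =>
      have := eqv_stk hr hw (vtx_exact (w := w) h)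
      rw [hvalb b, hvalb c, hstkb b, hstkb c] at this
      have hbc : (b : ℕ) = (c : ℕ) := List.head_eq_of_cons_eq this
      exact congrArg _ (Fin.ext hbc)
  have hsurj : Function.Surjective f := by
    intro x
    obtain ⟨v, hv⟩ := Quotient.exists_rep x
    have hival : ((v.val : ℕ) : ZMod n) = v := ZMod.natCast_rightInverse v
    have hxv : x = vtx w v.val := by
      rw [← hv]
      unfold vtx
      rw [hival]
    have hb := back hr hw v.val (ZMod.val_lt v)
    cases hs : stk (w.take v.val) with
    | nil =>
      refine ⟨none, ?_⟩
      show vtx w 0 = x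
      rw [hxv]
      exact (vtx_sound (by rw [← canonIdx_eq_nil hs]; exact hb)).symm
    | cons b t =>
      have hbw : b ∈ w := List.mem_of_mem_take (mem_stk (hs ▸ (List.mem_cons_self : b ∈ b :: t)))
      have hbk : b < k := (hmem b).1 hbw
      refine ⟨some ⟨b, hbk⟩, ?_⟩
      show vtx w (w.idxOf b + 1) = x
      rw [hxv]
      exact (vtx_sound (by rw [← canonIdx_eq_cons hs]; exact hb)).symm
  have := Nat.card_eq_of_bijective f ⟨hinj, hsurj⟩
  rw [← this, Nat.card_eq_fintype_card]
  simp

lemma gw_connected (hk : 1 ≤ k) (hlen : w.length = 2 * k) : (Gw w).Connected := by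
  haveI : NeZero w.length := ⟨by omega⟩
  set n := w.length with hn
  have hadjstep : ∀ i, i < n → (Gw w).Reachable (vtx w i) (vtx w (i + 1)) := by
    intro i hi
    by_cases heq : vtx w i = vtx w (i + 1)
    · rw [heq]
    · refine SimpleGraph.Adj.reachable ?_
      show (Gw w).Adj (vtx w i) (vtx w (i + 1))
      unfold Gw
      rw [SimpleGraph.fromRel_adj]
      exact ⟨heq, Or.inl ⟨i, hi, rfl, rfl⟩⟩
  have hreach0 : ∀ i, i ≤ n → (Gw w).Reachable (vtx w 0) (vtx w i) := by
    intro i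
    induction i with
    | zero => intro _; exact SimpleGraph.Reachable.refl _
    | succ m ih => intro hm; exact (ih (by omega)).trans (hadjstep m (by omega))
  have hv : ∀ x : QuotVert w, (Gw w).Reachable (vtx w 0) x := by
    intro x
    obtain ⟨v, hv⟩ := Quotient.exists_rep x
    have hival : ((v.val : ℕ) : ZMod n) = v := ZMod.natCast_rightInverse v
    have hxv : x = vtx w v.val := by
      rw [← hv]; unfold vtx; rw [hival]
    rw [hxv]
    exact hreach0 v.val (le_of_lt (ZMod.val_lt v))
  haveI : Nonempty (QuotVert w) := ⟨vtx w 0⟩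
  exact ⟨fun x y => (hv x).symm.trans (hv y)⟩

lemma gw_edge_ncard_le (hk : 1 ≤ k) (hlen : w.length = 2 * k)
    (hw : ∀ a ∈ w, w.count a = 2) :
    (Gw w).edgeSet.ncard ≤
      ((Finset.range (2 * k)).filter
        (fun i => ∀ j < i, w.getD j 0 ≠ w.getD i 0)).card := by
  haveI : NeZero w.length := ⟨by omega⟩
  set n := w.length with hn
  set F := (Finset.range (2 * k)).filter
      (fun i => ∀ j < i, w.getD j 0 ≠ w.getD i 0) with hF
  have hkey : ∀ i, i < n → ∃ i₀ ∈ F, s(vtx w i, vtx w (i + 1)) = s(vtx w i₀, vtx w (i₀ + 1)) := by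
    intro i hi
    have hbw : w.getD i 0 ∈ w := by
      rw [List.getD_eq_getElem _ _ hi]
      exact List.getElem_mem _
    set b := w.getD i 0 with hb
    set q := w.idxOf b with hq
    have hqlen : q < n := List.idxOf_lt_length_iff.2 hbw
    have hgq : w.getD q 0 = b := getD_indexOf hbw
    have hqF : q ∈ F := by
      rw [hF, Finset.mem_filter, Finset.mem_range]
      refine ⟨by omega, fun j hj hgj => ?_⟩
      rw [hgq] at hgj
      have := indexOf_le_of_getD (l := w) (by omega : j < w.length) hgj
      omega
    by_cases hqi : q = i
    · exact ⟨i, hqi ▸ hqF, rfl⟩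
    · have hqi' : q < i := by
        have := indexOf_le_of_getD (l := w) hi rfl
        rw [← hb, ← hq] at this
        omega
      have r1 : c2Rel w ((q : ℕ) : ZMod n) (((i + 1 : ℕ)) : ZMod n) :=
        ⟨q, i, hqi', hi, by rw [hgq], Or.inl ⟨rfl, rfl⟩⟩
      have r2 : c2Rel w (((q + 1 : ℕ)) : ZMod n) ((i : ℕ) : ZMod n) :=
        ⟨q, i, hqi', hi, by rw [hgq], Or.inr ⟨rfl, rfl⟩⟩
      have e1 : vtx w q = vtx w (i + 1) := vtx_sound (Relation.EqvGen.rel _ _ r1)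
      have e2 : vtx w (q + 1) = vtx w i := vtx_sound (Relation.EqvGen.rel _ _ r2)
      refine ⟨q, hqF, ?_⟩
      rw [← e1, ← e2]
      rw [Sym2.eq_swap]
  have hsubE : (Gw w).edgeSet ⊆ (fun i => s(vtx w i, vtx w (i + 1))) '' (↑F : Set ℕ) := by
    intro e
    induction e using Sym2.ind with
    | _ x y =>
      intro he
      rw [SimpleGraph.mem_edgeSet] at he
      have he' : (SimpleGraph.fromRel (fun x y => ∃ i : ℕ, i < w.length ∧
          x = Quotient.mk (Relation.EqvGen.setoid (c2Rel w)) ((i : ZMod w.length)) ∧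
          y = Quotient.mk (Relation.EqvGen.setoid (c2Rel w)) (((i + 1 : ℕ) : ZMod w.length)))).Adj x y := he
      replace he' := (SimpleGraph.fromRel_adj _ _ _).1 he'
      obtain ⟨hne, hor⟩ := he'
      have : ∃ i, i < n ∧ s(x, y) = s(vtx w i, vtx w (i + 1)) := by
        rcases hor with ⟨i, hi, hx, hy⟩ | ⟨i, hi, hy, hx⟩
        · exact ⟨i, hi, by rw [hx, hy]; rfl⟩
        · exact ⟨i, hi, by rw [hx, hy, Sym2.eq_swap]; rfl⟩
      obtain ⟨i, hi, hxy⟩ := this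
      obtain ⟨i₀, hi₀F, hswap⟩ := hkey i hi
      exact ⟨i₀, hi₀F, by rw [hxy, hswap]⟩
  calc (Gw w).edgeSet.ncard
      ≤ ((fun i => s(vtx w i, vtx w (i + 1))) '' (↑F : Set ℕ)).ncard :=
        Set.ncard_le_ncard hsubE (Set.Finite.image _ (F.finite_toSet))
    _ ≤ (↑F : Set ℕ).ncard := Set.ncard_image_le F.finite_toSet
    _ = F.card := Set.ncard_coe_finset F

end Main

end CWT

/-- Every Catalan word of length `2k` has exactly `k + 1` generating vertices
(position `0` together with the positions just after the first occurrences of the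
letters), and the quotient of the cycle `0 — 1 — ⋯ — (2k−1) — 0` by the (C2)
identifications is a tree on `k + 1` vertices. -/
theorem catalan_word_tree (k : ℕ) (hk : 1 ≤ k) (w : List ℕ)
    (hlen : w.length = 2 * k) (hcat : IsCatalanWord w) :
    (insert 0 (((Finset.range (2 * k)).filter
        (fun i => ∀ j < i, w.getD j 0 ≠ w.getD i 0)).image (· + 1))).card = k + 1 ∧
    Nat.card (QuotVert w) = k + 1 ∧
    (Gw w).IsTree := by
  classical
  obtain ⟨hw, hord, hr⟩ := hcat
  haveI : NeZero w.length := ⟨by omega⟩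
  obtain ⟨hmem, hcardtf⟩ := CWT.letters hlen hw hord
  set F := (Finset.range (2 * k)).filter
      (fun i => ∀ j < i, w.getD j 0 ≠ w.getD i 0) with hF
  have hFcard : F.card = k := by
    have hinj : Set.InjOn (fun i => w.getD i 0) ↑F := by
      intro i hi i' hi' hgg
      rw [Finset.mem_coe, hF, Finset.mem_filter] at hi hi'
      rcases lt_trichotomy i i' with h | h | h
      · exact absurd hgg (hi'.2 i h)
      · exact h
      · exact absurd hgg.symm (hi.2 i' h)
    have himg : F.image (fun i => w.getD i 0) = Finset.range k := by
      apply Finset.Subset.antisymm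
      · intro b hb
        rw [Finset.mem_image] at hb
        obtain ⟨i, hiF, hib⟩ := hb
        rw [hF, Finset.mem_filter, Finset.mem_range] at hiF
        rw [Finset.mem_range, ← hib]
        apply (hmem _).1
        have hi' : i < w.length := by omega
        rw [List.getD_eq_getElem _ _ hi']
        exact List.getElem_mem _
      · intro b hb
        rw [Finset.mem_range] at hb
        have hbw : b ∈ w := (hmem b).2 hb
        rw [Finset.mem_image]
        refine ⟨w.idxOf b, ?_, CWT.getD_indexOf hbw⟩
        rw [hF, Finset.mem_filter, Finset.mem_range]
        have hlt : w.idxOf b < w.length := List.idxOf_lt_length_iff.2 hbw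
        refine ⟨by omega, fun j hj hgj => ?_⟩
        rw [CWT.getD_indexOf hbw] at hgj
        have := CWT.indexOf_le_of_getD (l := w) (by omega : j < w.length) hgj
        omega
    have hci := Finset.card_image_of_injOn hinj
    rw [himg, Finset.card_range] at hci
    omega
  refine ⟨?_, ?_, ?_⟩
  · rw [Finset.card_insert_of_notMem (by simp),
      Finset.card_image_of_injective _ (add_left_injective 1), hFcard]
  · exact CWT.quot_card hk hlen hw hmem hr
  · haveI : Finite (QuotVert w) := Quotient.finite _
    haveI : Fintype (QuotVert w) := Fintype.ofFinite _
    have hcardV : Fintype.card (QuotVert w) = k + 1 := by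
      rw [← Nat.card_eq_fintype_card]
      exact CWT.quot_card hk hlen hw hmem hr
    have hE := CWT.gw_edge_ncard_le hk hlen hw
    rw [← hF] at hE
    refine CWT.isTree_of_connected_of_ncard_le _ (Gw w) (CWT.gw_connected hk hlen) rfl ?_
    rw [hcardV]
    omega
end
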